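/- arXiv:2301.08273 — 4 statements merged into one kernel-verified Lean document; each statement's English description precedes it below -/
import Mathlib

section
/- Let f be a bounded measurable function on a doubling metric measure space (X,d,μ), let {B_i = B(x_i,ε)} be an ε-covering with partition of unity {φ_i} satisfying 0 ≤ φ_i ≤ 1, Σ_i φ_i = 1, φ_i = 0 outside B(x_i,2ε), and each φ_i is (C/ε)-Lipschitz. Define f_ε := Σ_i f_{B_i} φ_i where f_{B_i} is the mean of f over B_i. Then for every x ∈ X, |f_ε(x) − f(x)| ≤ C' ⨍_{B(x,6ε)} |f(x) − f(y)| dμ(y), where C' depends only on the doubling constant and the bounded overlap constant of the covering. -/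
/-!
Since `∑ φ_i(x) = 1`, the difference `f_ε(x) - f(x)` is a convex combination of the
`f_{B_i} - f(x)` over those `i` with `x ∈ B(x_i, 2ε)`. For such `i` the ball `B_i` lies in
`B(x, 6ε)`, while `B(x, 6ε) ⊆ B(x_i, 2³ε)`, so three doublings give
`μ(B(x, 6ε)) ≤ C_D³ μ(B_i)` and `|f_{B_i} - f(x)| ≤ C_D³ ⨍_{B(x,6ε)} |f(x) - f(y)| dμ(y)`.
-/

open MeasureTheory Metric Filter
open scoped ENNReal

section Doubling

variable {X : Type*} [MetricSpace X] [MeasurableSpace X] {μ : Measure X} {D : ℝ≥0∞}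

lemma measure_ball_two_pow_mul_le
    (hdouble : ∀ (x : X) (r : ℝ), 0 < r → μ (ball x (2 * r)) ≤ D * μ (ball x r))
    (z : X) {r : ℝ} (hr : 0 < r) (n : ℕ) :
    μ (ball z (2 ^ n * r)) ≤ D ^ n * μ (ball z r) := by
  induction n with
  | zero => simp
  | succ n ih =>
    calc μ (ball z (2 ^ (n + 1) * r)) = μ (ball z (2 * (2 ^ n * r))) := by ring_nf
      _ ≤ D * μ (ball z (2 ^ n * r)) := hdouble z _ (by positivity)
      _ ≤ D * (D ^ n * μ (ball z r)) := by gcongr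
      _ = D ^ (n + 1) * μ (ball z r) := by ring

lemma measure_ball_six_mul_le_of_dist_lt
    (hdouble : ∀ (x : X) (r : ℝ), 0 < r → μ (ball x (2 * r)) ≤ D * μ (ball x r))
    {x z : X} {r : ℝ} (hr : 0 < r) (hxz : dist x z < 2 * r) :
    μ (ball x (6 * r)) ≤ D ^ 3 * μ (ball z r) :=
  calc μ (ball x (6 * r)) ≤ μ (ball z (2 ^ 3 * r)) :=
        measure_mono (ball_subset_ball' (by linarith))
    _ ≤ D ^ 3 * μ (ball z r) := measure_ball_two_pow_mul_le hdouble z hr 3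

end Doubling

section Averages

variable {α : Type*} [MeasurableSpace α] {μ : Measure α} {s t : Set α}

lemma abs_setAverage_sub_le {f : α → ℝ} (hs₀ : μ s ≠ 0) (hs : μ s ≠ ⊤)
    (hf : IntegrableOn f s μ) (a : ℝ) :
    |(⨍ y in s, f y ∂μ) - a| ≤ ⨍ y in s, |a - f y| ∂μ := by
  have hμs : μ.real s ≠ 0 := (ENNReal.toReal_pos hs₀ hs).ne'
  have hsub : ⨍ y in s, (f y - a) ∂μ = (⨍ y in s, f y ∂μ) - a := by
    rw [setAverage_eq, setAverage_eq, integral_sub hf (integrableOn_const hs),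
      setIntegral_const, smul_sub, smul_smul, inv_mul_cancel₀ hμs, one_smul]
  rw [← hsub, setAverage_eq, setAverage_eq, smul_eq_mul, smul_eq_mul, abs_mul,
    abs_of_nonneg (by positivity)]
  gcongr
  calc |∫ y in s, (f y - a) ∂μ| ≤ ∫ y in s, |f y - a| ∂μ :=
        norm_integral_le_integral_norm (fun y => f y - a)
    _ = ∫ y in s, |a - f y| ∂μ := by simp_rw [abs_sub_comm]

lemma setAverage_le_mul_setAverage_of_subset {g : α → ℝ} {K : ℝ} (hst : s ⊆ t)
    (hK : μ t ≤ ENNReal.ofReal K * μ s) (hs₀ : μ s ≠ 0) (ht : μ t ≠ ⊤) (hg : 0 ≤ g)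
    (hgi : IntegrableOn g t μ) :
    ⨍ y in s, g y ∂μ ≤ K * ⨍ y in t, g y ∂μ := by
  have hs : μ s ≠ ⊤ := ((measure_mono hst).trans_lt ht.lt_top).ne
  have hK₀ : 0 ≤ K := by
    by_contra hneg
    rw [ENNReal.ofReal_of_nonpos (not_le.1 hneg).le, zero_mul, nonpos_iff_eq_zero] at hK
    exact hs₀ (measure_mono_null hst hK)
  have hμs : 0 < μ.real s := ENNReal.toReal_pos hs₀ hs
  have hμt : μ.real t ≤ K * μ.real s := by
    simpa [measureReal_def, ENNReal.toReal_mul, ENNReal.toReal_ofReal hK₀] using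
      ENNReal.toReal_mono (ENNReal.mul_ne_top ENNReal.ofReal_ne_top hs) hK
  have hint : ∫ y in s, g y ∂μ ≤ ∫ y in t, g y ∂μ :=
    setIntegral_mono_set hgi (Eventually.of_forall hg) hst.eventuallyLE
  have havg_t : 0 ≤ ⨍ y in t, g y ∂μ := by
    rw [setAverage_eq]
    exact smul_nonneg (by positivity) (integral_nonneg hg)
  rw [setAverage_eq, smul_eq_mul, inv_mul_le_iff₀ hμs]
  calc ∫ y in s, g y ∂μ ≤ μ.real t * ⨍ y in t, g y ∂μ := by
        rwa [← smul_eq_mul, measure_smul_setAverage g ht]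
    _ ≤ K * μ.real s * ⨍ y in t, g y ∂μ := by gcongr
    _ = μ.real s * (K * ⨍ y in t, g y ∂μ) := by ring

end Averages

lemma abs_tsum_mul_sub_le_of_tsum_eq_one {ι : Type*} {w a : ι → ℝ} {b K : ℝ}
    (hw : ∀ i, 0 ≤ w i) (hw₁ : ∑' i, w i = 1) (hK : ∀ i, w i ≠ 0 → |a i - b| ≤ K) :
    |(∑' i, a i * w i) - b| ≤ K := by
  have hws : Summable w := by
    by_contra h
    rw [tsum_eq_zero_of_not_summable h] at hw₁
    exact zero_ne_one hw₁
  have hbound : ∀ i, ‖(a i - b) * w i‖ ≤ K * w i := fun i => by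
    rcases eq_or_ne (w i) 0 with hi | hi
    · simp [hi]
    · rw [Real.norm_eq_abs, abs_mul, abs_of_nonneg (hw i)]
      exact mul_le_mul_of_nonneg_right (hK i hi) (hw i)
  have hgs : Summable fun i => ‖(a i - b) * w i‖ :=
    .of_nonneg_of_le (fun _ => norm_nonneg _) hbound (hws.mul_left K)
  have hsplit : (∑' i, a i * w i) - b = ∑' i, (a i - b) * w i := by
    have heq : ∀ i, a i * w i = (a i - b) * w i + b * w i := fun i => by ring
    rw [tsum_congr heq, hgs.of_norm.tsum_add (hws.mul_left b), tsum_mul_left, hw₁, mul_one,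
      add_sub_cancel_right]
  rw [hsplit, ← Real.norm_eq_abs]
  calc ‖∑' i, (a i - b) * w i‖ ≤ ∑' i, ‖(a i - b) * w i‖ := norm_tsum_le_tsum_norm hgs
    _ ≤ ∑' i, K * w i := hgs.tsum_le_tsum hbound (hws.mul_left K)
    _ = K := by rw [tsum_mul_left, hw₁, mul_one]

theorem stmt2_general {X : Type*} [MetricSpace X] [MeasurableSpace X]
    {ι : Type*}
    (μ : Measure X) (CD : ℝ) (hCD : 0 < CD)
    (hpos : ∀ (x : X) (r : ℝ), 0 < r → 0 < μ (ball x r))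
    (hfin : ∀ (x : X) (r : ℝ), 0 < r → μ (ball x r) < ⊤)
    (hdouble : ∀ (x : X) (r : ℝ), 0 < r →
      μ (ball x (2 * r)) ≤ ENNReal.ofReal CD * μ (ball x r))
    (ε : ℝ) (hε : 0 < ε) (c : ι → X) (φ : ι → X → ℝ)
    (hnonneg : ∀ i x, 0 ≤ φ i x)
    (hsum : ∀ x, ∑' i, φ i x = 1)
    (hsupp : ∀ i x, x ∉ ball (c i) (2 * ε) → φ i x = 0)
    (f : X → ℝ) (hmeas : Measurable f) (M : ℝ) (hbdd : ∀ x, |f x| ≤ M) :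
    ∃ C' : ℝ, 0 < C' ∧ ∀ x : X,
      |(∑' i, (⨍ y in ball (c i) ε, f y ∂μ) * φ i x) - f x| ≤
        C' * ⨍ y in ball x (6 * ε), |f x - f y| ∂μ := by
  refine ⟨CD ^ 3, by positivity, fun x => ?_⟩
  have h6ε : 0 < 6 * ε := by positivity
  have hf_int : IntegrableOn f (ball x (6 * ε)) μ :=
    Measure.integrableOn_of_bounded (hfin x _ h6ε).ne hmeas.aestronglyMeasurable
      (Eventually.of_forall hbdd)
  have hosc_int : IntegrableOn (fun y => |f x - f y|) (ball x (6 * ε)) μ :=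
    ((integrableOn_const (hfin x _ h6ε).ne).sub hf_int).abs
  refine abs_tsum_mul_sub_le_of_tsum_eq_one (hnonneg · x) (hsum x) fun i hi => ?_
  have hxi : dist x (c i) < 2 * ε := by
    by_contra h
    exact hi (hsupp i x (by rwa [mem_ball]))
  have hBi : ball (c i) ε ⊆ ball x (6 * ε) :=
    ball_subset_ball' (by rw [dist_comm]; linarith)
  calc |(⨍ y in ball (c i) ε, f y ∂μ) - f x|
      ≤ ⨍ y in ball (c i) ε, |f x - f y| ∂μ :=
        abs_setAverage_sub_le (hpos _ _ hε).ne' (hfin _ _ hε).ne (hf_int.mono_set hBi) _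
    _ ≤ CD ^ 3 * ⨍ y in ball x (6 * ε), |f x - f y| ∂μ := by
        refine setAverage_le_mul_setAverage_of_subset hBi ?_ (hpos _ _ hε).ne'
          (hfin x _ h6ε).ne (fun _ => abs_nonneg _) hosc_int
        rw [ENNReal.ofReal_pow hCD.le]
        exact measure_ball_six_mul_le_of_dist_lt hdouble hε hxi

/-- pointwise estimate for the discrete convolution
`f_ε = Σ_i f_{B_i} φ_i` in terms of an average of `|f(x) - f(y)|` over `B(x,6ε)`. -/
theorem stmt2 {X : Type*} [MetricSpace X] [MeasurableSpace X] [BorelSpace X]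
    {ι : Type*} [Countable ι]
    (μ : Measure X) (CD : ℝ) (hCD : 0 < CD)
    (hpos : ∀ (x : X) (r : ℝ), 0 < r → 0 < μ (ball x r))
    (hfin : ∀ (x : X) (r : ℝ), 0 < r → μ (ball x r) < ⊤)
    (hdouble : ∀ (x : X) (r : ℝ), 0 < r →
      μ (ball x (2 * r)) ≤ ENNReal.ofReal CD * μ (ball x r))
    (N : ℕ) (ε : ℝ) (hε : 0 < ε) (c : ι → X) (φ : ι → X → ℝ)
    (hcover : (⋃ i, ball (c i) ε) = Set.univ)
    (hoverlap : ∀ x : X, Set.ncard {i | x ∈ ball (c i) (5 * ε)} ≤ N)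
    (hnonneg : ∀ i x, 0 ≤ φ i x) (hle : ∀ i x, φ i x ≤ 1)
    (hsum : ∀ x, ∑' i, φ i x = 1)
    (hsupp : ∀ i x, x ∉ ball (c i) (2 * ε) → φ i x = 0)
    (CL : ℝ) (hCL : 0 < CL) (hlip : ∀ i, LipschitzWith (Real.toNNReal (CL / ε)) (φ i))
    (f : X → ℝ) (hmeas : Measurable f) (M : ℝ) (hbdd : ∀ x, |f x| ≤ M) :
    ∃ C' : ℝ, 0 < C' ∧ ∀ x : X,
      |(∑' i, (⨍ y in ball (c i) ε, f y ∂μ) * φ i x) - f x| ≤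
        C' * ⨍ y in ball x (6 * ε), |f x - f y| ∂μ :=
  stmt2_general μ CD hCD hpos hfin hdouble ε hε c φ hnonneg hsum hsupp f hmeas M hbdd
end

section
/- Let (X,d,μ) be a compact doubling metric measure space satisfying the 2-Poincaré inequality with Lipschitz constants. Then the Korevaar-Schoen space KS^{1,2}(X) := {f ∈ L²(X,μ) : limsup_{r→0⁺} E(f,r) < ∞} is relatively compact in L²(X,μ), i.e. every bounded subset of KS^{1,2}(X) (bounded in the norm ‖f‖_{L²} + sup_{r>0} E(f,r)^{1/2}) is totally bounded in L²(X,μ). -/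
/-!
Boundedness of `KSenergy μ f r` at one small scale `r` already forces `f` to be `L²`-close to a
step function. Partition `X` into finitely many measurable cells, each of diameter less than `r`
and containing a ball of radius `r / 8`; by doubling, `μ (ball x r) ≤ CD⁴ μ A` for `x` in a cell
`A`. Writing the variance of `f` on `A` as `(2 μ A)⁻¹ ∫_A ∫_A (f x - f y)²` and enlarging the
inner domain to `ball x r` bounds it by `CD⁴ / 2 · ∫_A ⨍_{ball x r} (f x - f y)²`, so the total
variance of `f` over the cells is at most `CD⁴ r² M / 2`. Two functions whose vectors of cell
averages are `ε`-close are therefore `L²`-close, and these vectors range over a bounded, hence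
totally bounded, subset of `ℝⁿ`.
-/

open MeasureTheory Metric Filter Topology

/-- The pointwise upper Lipschitz constant. -/
noncomputable def lipConst {X : Type*} [MetricSpace X] (f : X → ℝ) (y : X) : ℝ :=
  Filter.limsup (fun r : ℝ => ⨆ x ∈ closedBall y r, |f x - f y| / r) (𝓝[>] (0 : ℝ))

/-- The Korevaar–Schoen energy `E(g,r)` at scale `r` with exponent 2. -/
noncomputable def KSenergy {X : Type*} [MetricSpace X] [MeasurableSpace X]
    (μ : Measure X) (g : X → ℝ) (r : ℝ) : ℝ :=
  ∫ x, (⨍ y in ball x r, (g x - g y) ^ 2 ∂μ) / r ^ 2 ∂μ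

open Function
open scoped NNReal

namespace KorevaarSchoen

section Variance

variable {X : Type*} [MeasurableSpace X] {ν : Measure X} [IsFiniteMeasure ν] {f : X → ℝ}

theorem integral_sub_sq (hf : MemLp f 2 ν) (a : ℝ) :
    ∫ x, (f x - a) ^ 2 ∂ν = ∫ x, f x ^ 2 ∂ν - 2 * a * ∫ x, f x ∂ν + ν.real Set.univ * a ^ 2 := by
  have hf1 : Integrable f ν := hf.integrable one_le_two
  have hexpand : (fun x => (f x - a) ^ 2) = fun x => f x ^ 2 - 2 * a * f x + a ^ 2 := by
    funext x; ring
  have hlin : Integrable (fun x => f x ^ 2 - 2 * a * f x) ν :=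
    hf.integrable_sq.sub (hf1.const_mul _)
  rw [hexpand, integral_add hlin (integrable_const _),
    integral_sub hf.integrable_sq (hf1.const_mul _), integral_const_mul, integral_const,
    smul_eq_mul]

theorem integral_sub_average_sq (hf : MemLp f 2 ν) :
    ∫ x, (f x - ⨍ y, f y ∂ν) ^ 2 ∂ν = ∫ x, f x ^ 2 ∂ν - (∫ x, f x ∂ν) ^ 2 / ν.real Set.univ := by
  rw [integral_sub_sq hf, average_eq, smul_eq_mul]
  rcases eq_zero_or_neZero ν with rfl | _
  · simp
  · field_simp [measureReal_univ_ne_zero]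
    ring

theorem sq_average_mul_le (hf : MemLp f 2 ν) :
    (⨍ x, f x ∂ν) ^ 2 * ν.real Set.univ ≤ ∫ x, f x ^ 2 ∂ν := by
  have hvar := integral_sub_average_sq hf ▸ integral_nonneg fun x => sq_nonneg (f x - ⨍ y, f y ∂ν)
  rw [average_eq, smul_eq_mul]
  rcases eq_zero_or_neZero ν with rfl | _
  · simp
  · have h0 := measureReal_univ_ne_zero (μ := ν)
    calc ((ν.real Set.univ)⁻¹ * ∫ x, f x ∂ν) ^ 2 * ν.real Set.univ
        = (∫ x, f x ∂ν) ^ 2 / ν.real Set.univ := by field_simp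
      _ ≤ ∫ x, f x ^ 2 ∂ν := by linarith

theorem integral_sub_sq_left (hf : MemLp f 2 ν) (x : X) :
    ∫ y, (f x - f y) ^ 2 ∂ν = ν.real Set.univ * f x ^ 2 - 2 * (∫ y, f y ∂ν) * f x
      + ∫ y, f y ^ 2 ∂ν := by
  simp_rw [← neg_sub (f _) (f x), neg_sq]
  rw [integral_sub_sq hf]
  ring

theorem integrable_integral_sub_sq (hf : MemLp f 2 ν) :
    Integrable (fun x => ∫ y, (f x - f y) ^ 2 ∂ν) ν := by
  simp_rw [integral_sub_sq_left hf]
  exact ((hf.integrable_sq.const_mul _).sub ((hf.integrable one_le_two).const_mul _)).add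
    (integrable_const _)

theorem integral_integral_sub_sq (hf : MemLp f 2 ν) :
    ∫ x, ∫ y, (f x - f y) ^ 2 ∂ν ∂ν = 2 * ν.real Set.univ * ∫ x, (f x - ⨍ y, f y ∂ν) ^ 2 ∂ν := by
  have hf1 : Integrable f ν := hf.integrable one_le_two
  have hlin : Integrable (fun x => ν.real Set.univ * f x ^ 2 - 2 * (∫ y, f y ∂ν) * f x) ν :=
    (hf.integrable_sq.const_mul _).sub (hf1.const_mul _)
  simp_rw [integral_sub_sq_left hf]
  rw [integral_add hlin (integrable_const _),
    integral_sub (hf.integrable_sq.const_mul _) (hf1.const_mul _), integral_const_mul,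
    integral_const_mul, integral_const, smul_eq_mul, integral_sub_average_sq hf]
  rcases eq_zero_or_neZero ν with rfl | _
  · simp
  · field_simp [measureReal_univ_ne_zero]
    ring

end Variance

theorem sq_sub_le_of_abs_sub_le {u v a b ε : ℝ} (h : |a - b| ≤ ε) :
    (u - v) ^ 2 ≤ 3 * (u - a) ^ 2 + 3 * (v - b) ^ 2 + 3 * ε ^ 2 := by
  have hab : (a - b) ^ 2 ≤ ε ^ 2 := sq_le_sq' (abs_le.1 h).1 (abs_le.1 h).2
  nlinarith [sq_nonneg (u - a + (v - b)), sq_nonneg (u - a - (a - b)), sq_nonneg (v - b + (a - b))]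

theorem exists_pos_mul_sq_lt (a : ℝ) {b : ℝ} (hb : 0 < b) : ∃ r > 0, a * r ^ 2 < b := by
  have h : Tendsto (fun r : ℝ => a * r ^ 2) (𝓝[>] 0) (𝓝 0) :=
    ((show Continuous fun r : ℝ => a * r ^ 2 by fun_prop).tendsto' 0 0 (by simp)).mono_left
      nhdsWithin_le_nhds
  obtain ⟨r, hr, hrpos⟩ := ((h.eventually (gt_mem_nhds hb)).and self_mem_nhdsWithin).exists
  exact ⟨r, hrpos, hr⟩

theorem exists_finite_subset_dist_lt {α β : Type*} [PseudoMetricSpace β] {v : α → β} {S : Set α}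
    (hS : TotallyBounded (v '' S)) {ε : ℝ} (hε : 0 < ε) :
    ∃ T ⊆ S, T.Finite ∧ ∀ f ∈ S, ∃ g ∈ T, dist (v f) (v g) < ε := by
  obtain ⟨T, hTS, hTfin, hT⟩ :=
    Set.exists_subset_image_finite_and.1 (finite_approx_of_totallyBounded hS ε hε)
  refine ⟨T, hTS, hTfin, fun f hf => ?_⟩
  obtain ⟨_, ⟨g, hg, rfl⟩, hfg⟩ := Set.mem_iUnion₂.1 (hT ⟨f, hf, rfl⟩)
  exact ⟨g, hg, hfg⟩

section CellAverages

variable {X : Type*} [MeasurableSpace X] {μ : Measure X} [IsFiniteMeasure μ] {f : X → ℝ}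

theorem totallyBounded_image_setAverage {ι : Type*} [Fintype ι]
    {A : ι → Set X} (hA : ∀ i, 0 < μ.real (A i)) {S : Set (X → ℝ)} {M : ℝ}
    (hL2 : ∀ f ∈ S, MemLp f 2 μ) (hM : ∀ f ∈ S, ∫ x, f x ^ 2 ∂μ ≤ M) :
    TotallyBounded ((fun f i => ⨍ x in A i, f x ∂μ) '' S) := by
  refine (isCompact_univ_pi fun i =>
    isCompact_closedBall (0 : ℝ) √(M / μ.real (A i))).totallyBounded.subset ?_
  rintro _ ⟨f, hf, rfl⟩ i -
  rw [mem_closedBall_zero_iff, Real.norm_eq_abs]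
  refine Real.abs_le_sqrt ((le_div_iff₀ (hA i)).2 ?_)
  calc (⨍ x in A i, f x ∂μ) ^ 2 * μ.real (A i) ≤ ∫ x in A i, f x ^ 2 ∂μ := by
        simpa only [measureReal_restrict_apply_univ] using
          sq_average_mul_le ((hL2 f hf).restrict (A i))
    _ ≤ ∫ x, f x ^ 2 ∂μ :=
        setIntegral_le_integral (hL2 f hf).integrable_sq (Eventually.of_forall fun x => sq_nonneg _)
    _ ≤ M := hM f hf

theorem integral_sub_sq_le_of_abs_setAverage_sub_le {ι : Type*} [Fintype ι]
    {A : ι → Set X} (hmeas : ∀ i, MeasurableSet (A i)) (hdisj : Pairwise (Disjoint on A))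
    (hcover : ⋃ i, A i = Set.univ) {g : X → ℝ} (hf : MemLp f 2 μ) (hg : MemLp g 2 μ) {ε : ℝ}
    (hε : ∀ i, |⨍ x in A i, f x ∂μ - ⨍ x in A i, g x ∂μ| ≤ ε) :
    ∫ x, (f x - g x) ^ 2 ∂μ ≤ 3 * ∑ i, ∫ x in A i, (f x - ⨍ y in A i, f y ∂μ) ^ 2 ∂μ
      + 3 * ∑ i, ∫ x in A i, (g x - ⨍ y in A i, g y ∂μ) ^ 2 ∂μ + 3 * ε ^ 2 * μ.real Set.univ := by
  have hfg : Integrable (fun x => (f x - g x) ^ 2) μ := (hf.sub hg).integrable_sq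
  have hcell : ∀ i, ∫ x in A i, (f x - g x) ^ 2 ∂μ
      ≤ 3 * ∫ x in A i, (f x - ⨍ y in A i, f y ∂μ) ^ 2 ∂μ
        + 3 * ∫ x in A i, (g x - ⨍ y in A i, g y ∂μ) ^ 2 ∂μ + 3 * ε ^ 2 * μ.real (A i) := by
    intro i
    set a := ⨍ y in A i, f y ∂μ
    set b := ⨍ y in A i, g y ∂μ
    have hfa : IntegrableOn (fun x => (f x - a) ^ 2) (A i) μ :=
      (hf.sub (memLp_const a)).integrable_sq.integrableOn
    have hgb : IntegrableOn (fun x => (g x - b) ^ 2) (A i) μ :=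
      (hg.sub (memLp_const b)).integrable_sq.integrableOn
    have hsum : IntegrableOn (fun x => 3 * (f x - a) ^ 2 + 3 * (g x - b) ^ 2) (A i) μ :=
      (hfa.const_mul 3).add (hgb.const_mul 3)
    have hbound : IntegrableOn
        (fun x => 3 * (f x - a) ^ 2 + 3 * (g x - b) ^ 2 + 3 * ε ^ 2) (A i) μ :=
      hsum.add (integrable_const _)
    calc ∫ x in A i, (f x - g x) ^ 2 ∂μ
        ≤ ∫ x in A i, (3 * (f x - a) ^ 2 + 3 * (g x - b) ^ 2 + 3 * ε ^ 2) ∂μ :=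
          integral_mono hfg.integrableOn hbound fun x => sq_sub_le_of_abs_sub_le (hε i)
      _ = 3 * ∫ x in A i, (f x - a) ^ 2 ∂μ + 3 * ∫ x in A i, (g x - b) ^ 2 ∂μ
            + 3 * ε ^ 2 * μ.real (A i) := by
          rw [integral_add hsum (integrable_const _),
            integral_add (hfa.const_mul 3) (hgb.const_mul 3), integral_const_mul,
            integral_const_mul, setIntegral_const, smul_eq_mul, mul_comm (μ.real _)]
  rw [← setIntegral_univ, ← hcover,
    integral_iUnion_fintype hmeas hdisj fun i => hfg.integrableOn,
    measureReal_iUnion_fintype hdisj hmeas, Finset.mul_sum, Finset.mul_sum, Finset.mul_sum,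
    ← Finset.sum_add_distrib, ← Finset.sum_add_distrib]
  exact Finset.sum_le_sum fun i _ => hcell i

end CellAverages

variable {X : Type*} [MetricSpace X]

theorem exists_separated_cover [CompactSpace X] {ε : ℝ} (hε : 0 < ε) :
    ∃ (n : ℕ) (z : Fin n → X), Pairwise (fun i j => ε < dist (z i) (z j)) ∧
      ∀ x, ∃ i, dist x (z i) ≤ ε := by
  lift ε to ℝ≥0 using hε.le
  have hpack : packingNumber ε (Set.univ : Set X) ≠ ⊤ := by
    obtain ⟨N, -, hNfin, hN⟩ := exists_finite_isCover_of_isCompact (ε := ε / 2)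
      (by simpa using hε.ne') (isCompact_univ (X := X))
    refine ne_top_of_le_ne_top hNfin.encard_lt_top.ne ?_
    have h2 : 2 * (ε / 2) = ε := by ring
    simpa only [h2] using (packingNumber_two_mul_le_externalCoveringNumber (ε / 2) Set.univ).trans
      hN.externalCoveringNumber_le_encard
  set N := maximalSeparatedSet ε (Set.univ : Set X)
  have hfin : N.Finite := Set.encard_ne_top_iff.1 (encard_maximalSeparatedSet hpack ▸ hpack)
  have := hfin.to_subtype
  let e := Finite.equivFin N
  refine ⟨Nat.card N, fun i => e.symm i, fun i j hij => ?_, fun x => ?_⟩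
  · have h := isSeparated_maximalSeparatedSet (e.symm i).2 (e.symm j).2
      (fun h => hij (e.symm.injective (Subtype.ext h)))
    dsimp only at h ⊢
    rw [edist_dist, ← ENNReal.ofReal_coe_nnreal] at h
    exact (ENNReal.ofReal_lt_ofReal_iff_of_nonneg ε.2).1 h
  · obtain ⟨y, hyN, hxy⟩ := Set.mem_iUnion₂.1
      (isCover_iff_subset_iUnion_closedBall.1 (isCover_maximalSeparatedSet hpack) (Set.mem_univ x))
    exact ⟨e ⟨y, hyN⟩, by simpa only [Equiv.symm_apply_apply] using mem_closedBall.1 hxy⟩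

theorem exists_measurable_partition [MeasurableSpace X] [OpensMeasurableSpace X] [CompactSpace X]
    {ε : ℝ} (hε : 0 < ε) :
    ∃ (n : ℕ) (z : Fin n → X) (A : Fin n → Set X), (∀ i, MeasurableSet (A i)) ∧
      Pairwise (Disjoint on A) ∧ ⋃ i, A i = Set.univ ∧
      (∀ i, ball (z i) ε ⊆ A i) ∧ ∀ i, A i ⊆ closedBall (z i) (2 * ε) := by
  obtain ⟨n, z, hsep, hcov⟩ := exists_separated_cover (X := X) (mul_pos two_pos hε)
  set W := ⋃ j, ball (z j) ε
  set C : Fin n → Set X := fun i => closedBall (z i) (2 * ε)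
  -- The disjoint balls `ball (z i) ε` are kept whole; the rest of `X` is split among the
  -- `closedBall (z i) (2 * ε)` in index order.
  refine ⟨n, z, fun i => ball (z i) ε ∪ (disjointed C i \ W), fun i => ?_, fun i j hij => ?_, ?_,
    fun i => Set.subset_union_left, fun i => Set.union_subset
    (ball_subset_closedBall.trans (closedBall_subset_closedBall (by linarith))) ?_⟩
  · exact measurableSet_ball.union
      ((disjointedRec (p := MeasurableSet) (fun _ _ ht => ht.diff measurableSet_closedBall)
        measurableSet_closedBall).diff
        (MeasurableSet.iUnion fun j => measurableSet_ball))
  · have hW : ∀ k, ball (z k) ε ⊆ W := fun k => Set.subset_iUnion (fun j => ball (z j) ε) k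
    refine Disjoint.union_left (Disjoint.union_right ?_ ?_) (Disjoint.union_right ?_ ?_)
    · exact ball_disjoint_ball (by linarith [hsep hij])
    · exact Set.disjoint_sdiff_right.mono_left (hW i)
    · exact Set.disjoint_sdiff_left.mono_right (hW j)
    · exact (disjoint_disjointed _ hij).mono Set.sdiff_subset Set.sdiff_subset
  · refine Set.eq_univ_of_forall fun x => ?_
    by_cases hxW : x ∈ W
    · obtain ⟨j, hj⟩ := Set.mem_iUnion.1 hxW
      exact Set.mem_iUnion.2 ⟨j, Or.inl hj⟩
    · obtain ⟨i, hi⟩ := hcov x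
      have hxB : x ∈ ⋃ j, disjointed C j := (iUnion_disjointed (f := C)) ▸ Set.mem_iUnion.2 ⟨i, hi⟩
      obtain ⟨j, hj⟩ := Set.mem_iUnion.1 hxB
      exact Set.mem_iUnion.2 ⟨j, Or.inr ⟨hj, hxW⟩⟩
  · exact Set.sdiff_subset.trans (disjointed_subset _ i)

section Doubling

variable [MeasurableSpace X] {μ : Measure X} {CD : ℝ}

theorem measure_ball_two_pow_mul_le
    (hdouble : ∀ (x : X) (r : ℝ), 0 < r → μ (ball x (2 * r)) ≤ ENNReal.ofReal CD * μ (ball x r))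
    (x : X) {s : ℝ} (hs : 0 < s) (n : ℕ) :
    μ (ball x (2 ^ n * s)) ≤ ENNReal.ofReal CD ^ n * μ (ball x s) := by
  induction n with
  | zero => simp
  | succ n ih =>
    calc μ (ball x (2 ^ (n + 1) * s)) = μ (ball x (2 * (2 ^ n * s))) := by ring_nf
      _ ≤ ENNReal.ofReal CD * μ (ball x (2 ^ n * s)) := hdouble x _ (by positivity)
      _ ≤ ENNReal.ofReal CD * (ENNReal.ofReal CD ^ n * μ (ball x s)) := by gcongr
      _ = ENNReal.ofReal CD ^ (n + 1) * μ (ball x s) := by ring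

theorem exists_doubling_partition [OpensMeasurableSpace X] [CompactSpace X] [IsFiniteMeasure μ]
    (hCD : 0 < CD) (hpos : ∀ (x : X) (r : ℝ), 0 < r → 0 < μ (ball x r))
    (hdouble : ∀ (x : X) (r : ℝ), 0 < r → μ (ball x (2 * r)) ≤ ENNReal.ofReal CD * μ (ball x r))
    {r : ℝ} (hr : 0 < r) :
    ∃ (n : ℕ) (A : Fin n → Set X), (∀ i, MeasurableSet (A i)) ∧ Pairwise (Disjoint on A) ∧
      ⋃ i, A i = Set.univ ∧ (∀ i, 0 < μ.real (A i)) ∧ (∀ i, ∀ x ∈ A i, A i ⊆ ball x r) ∧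
      ∀ i, ∀ x ∈ A i, μ.real (ball x r) ≤ CD ^ 4 * μ.real (A i) := by
  obtain ⟨n, z, A, hmeas, hdisj, hcover, hinner, houter⟩ :=
    exists_measurable_partition (X := X) (by positivity : 0 < r / 8)
  have hdist : ∀ i, ∀ x ∈ A i, dist x (z i) ≤ r / 4 := fun i x hx => by
    linarith [mem_closedBall.1 (houter i hx)]
  refine ⟨n, A, hmeas, hdisj, hcover, fun i => ?_, fun i x hx y hy => ?_, fun i x hx => ?_⟩
  · exact ENNReal.toReal_pos ((hpos (z i) _ (by positivity)).trans_le (measure_mono (hinner i))).ne'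
      (measure_ne_top μ _)
  · have := dist_triangle_right y x (z i)
    exact mem_ball.2 (by linarith [hdist i x hx, hdist i y hy])
  · have hball : ball x r ⊆ ball (z i) (2 ^ 4 * (r / 8)) := fun y hy => by
      have := dist_triangle y x (z i)
      exact mem_ball.2 (by linarith [mem_ball.1 hy, hdist i x hx])
    have hle : μ (ball x r) ≤ ENNReal.ofReal CD ^ 4 * μ (A i) :=
      (measure_mono hball).trans
        ((measure_ball_two_pow_mul_le hdouble (z i) (by positivity) 4).trans
          (by gcongr; exact hinner i))
    simpa [measureReal_def, ENNReal.toReal_mul, hCD.le] using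
      ENNReal.toReal_mono (by finiteness) hle

end Doubling

section Energy

variable [MeasurableSpace X] {μ : Measure X} {f : X → ℝ} {r : ℝ}

noncomputable def ksDensity (μ : Measure X) (f : X → ℝ) (r : ℝ) (x : X) : ℝ :=
  ⨍ y in ball x r, (f x - f y) ^ 2 ∂μ

theorem integral_ksDensity (hr : r ≠ 0) :
    ∫ x, ksDensity μ f r x ∂μ = r ^ 2 * KSenergy μ f r := by
  rw [KSenergy, integral_div, mul_div_cancel₀ _ (pow_ne_zero 2 hr)]
  rfl

theorem ksDensity_eq (x : X) :
    ksDensity μ f r x = (μ.real (ball x r))⁻¹ * ∫ y in ball x r, (f x - f y) ^ 2 ∂μ :=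
  setAverage_eq μ _ _

theorem ksDensity_nonneg (x : X) : 0 ≤ ksDensity μ f r x := by
  rw [ksDensity_eq]
  exact mul_nonneg (inv_nonneg.2 measureReal_nonneg) (integral_nonneg fun y => sq_nonneg _)

theorem ksDensity_congr_ae {g : X → ℝ} (hfg : f =ᵐ[μ] g) :
    ksDensity μ f r =ᵐ[μ] ksDensity μ g r := by
  filter_upwards [hfg] with x hx
  refine average_congr (ae_restrict_of_ae ?_)
  filter_upwards [hfg] with y hy
  rw [hx, hy]

theorem exists_pos_le_measureReal_ball [IsFiniteMeasure μ] {ι : Type*} [Finite ι] {A : ι → Set X}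
    (hcover : ⋃ i, A i = Set.univ) (hA : ∀ i, 0 < μ.real (A i))
    (hsub : ∀ i, ∀ x ∈ A i, A i ⊆ ball x r) :
    ∃ c > 0, ∀ x, c ≤ μ.real (ball x r) := by
  have hmem : ∀ x, ∃ i, x ∈ A i := fun x => Set.mem_iUnion.1 (hcover ▸ Set.mem_univ x)
  rcases isEmpty_or_nonempty ι with hι | hι
  · exact ⟨1, one_pos, fun x => isEmptyElim (hmem x).choose⟩
  obtain ⟨j, hj⟩ := Finite.exists_min fun i => μ.real (A i)
  refine ⟨μ.real (A j), hA j, fun x => ?_⟩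
  obtain ⟨i, hi⟩ := hmem x
  exact (hj i).trans (measureReal_mono (hsub i x hi))

theorem integral_sub_setAverage_sq_le [IsFiniteMeasure μ] {A : Set X} {C : ℝ}
    (hA_meas : MeasurableSet A) (hA : 0 < μ.real A) (hsub : ∀ x ∈ A, A ⊆ ball x r)
    (hratio : ∀ x ∈ A, μ.real (ball x r) ≤ C * μ.real A) (hf : MemLp f 2 μ)
    (hg : IntegrableOn (ksDensity μ f r) A μ) :
    ∫ x in A, (f x - ⨍ y in A, f y ∂μ) ^ 2 ∂μ ≤ C / 2 * ∫ x in A, ksDensity μ f r x ∂μ := by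
  have hfA : MemLp f 2 (μ.restrict A) := hf.restrict A
  have hpoint : ∀ x ∈ A, ∫ y in A, (f x - f y) ^ 2 ∂μ ≤ μ.real A * (C * ksDensity μ f r x) := by
    intro x hx
    have hball : 0 < μ.real (ball x r) := hA.trans_le (measureReal_mono (hsub x hx))
    calc ∫ y in A, (f x - f y) ^ 2 ∂μ ≤ ∫ y in ball x r, (f x - f y) ^ 2 ∂μ :=
          setIntegral_mono_set ((memLp_const (f x)).sub hf).integrable_sq.integrableOn
            (Eventually.of_forall fun y => sq_nonneg _) (hsub x hx).eventuallyLE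
      _ = μ.real (ball x r) * ksDensity μ f r x := by
          rw [ksDensity_eq, mul_inv_cancel_left₀ hball.ne']
      _ ≤ C * μ.real A * ksDensity μ f r x :=
          mul_le_mul_of_nonneg_right (hratio x hx) (ksDensity_nonneg x)
      _ = μ.real A * (C * ksDensity μ f r x) := by ring
  have hvar : μ.real A * (2 * ∫ x in A, (f x - ⨍ y in A, f y ∂μ) ^ 2 ∂μ)
      ≤ μ.real A * (C * ∫ x in A, ksDensity μ f r x ∂μ) :=
    calc μ.real A * (2 * ∫ x in A, (f x - ⨍ y in A, f y ∂μ) ^ 2 ∂μ)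
        = ∫ x in A, ∫ y in A, (f x - f y) ^ 2 ∂μ ∂μ := by
          rw [integral_integral_sub_sq hfA, measureReal_restrict_apply_univ]
          ring
      _ ≤ ∫ x in A, μ.real A * (C * ksDensity μ f r x) ∂μ :=
          setIntegral_mono_on (integrable_integral_sub_sq hfA) ((hg.const_mul C).const_mul _)
            hA_meas hpoint
      _ = μ.real A * (C * ∫ x in A, ksDensity μ f r x ∂μ) := by
          rw [integral_const_mul, integral_const_mul]
  linarith [le_of_mul_le_mul_left hvar hA]

section SecondCountable

variable [OpensMeasurableSpace X] [SecondCountableTopology X]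

theorem measurableSet_mem_ball : MeasurableSet {p : X × X | p.2 ∈ ball p.1 r} :=
  (isOpen_lt (continuous_snd.dist continuous_fst) continuous_const).measurableSet

theorem measurable_measure_ball [SFinite μ] : Measurable fun x => μ (ball x r) :=
  measurable_measure_prodMk_left measurableSet_mem_ball

theorem stronglyMeasurable_setIntegral_ball [SFinite μ] {F : X × X → ℝ}
    (hF : StronglyMeasurable F) :
    StronglyMeasurable fun x => ∫ y in ball x r, F (x, y) ∂μ := by
  have hind : (fun x => ∫ y in ball x r, F (x, y) ∂μ) =
      fun x => ∫ y, {p : X × X | p.2 ∈ ball p.1 r}.indicator F (x, y) ∂μ :=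
    funext fun x => (integral_indicator measurableSet_ball).symm
  rw [hind]
  exact (hF.indicator measurableSet_mem_ball).integral_prod_right'

theorem aestronglyMeasurable_ksDensity [SFinite μ] (hf : AEStronglyMeasurable f μ) :
    AEStronglyMeasurable (ksDensity μ f r) μ := by
  refine AEStronglyMeasurable.congr ?_ (ksDensity_congr_ae hf.ae_eq_mk).symm
  have hF : StronglyMeasurable fun p : X × X => (hf.mk f p.1 - hf.mk f p.2) ^ 2 :=
    ((hf.stronglyMeasurable_mk.comp_measurable measurable_fst).sub
      (hf.stronglyMeasurable_mk.comp_measurable measurable_snd)).pow 2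
  simp_rw [funext ksDensity_eq]
  exact ((measurable_measure_ball.ennreal_toReal.inv).aestronglyMeasurable).mul
    (stronglyMeasurable_setIntegral_ball hF).aestronglyMeasurable

-- `KSenergy` is a Bochner integral, hence `0` unless `ksDensity` is integrable.
theorem integrable_ksDensity [IsFiniteMeasure μ] {c : ℝ} (hc : 0 < c)
    (hball : ∀ x, c ≤ μ.real (ball x r)) (hf : MemLp f 2 μ) :
    Integrable (ksDensity μ f r) μ := by
  have hbound : Integrable
      (fun x => c⁻¹ * (2 * μ.real Set.univ * f x ^ 2 + 2 * ∫ y, f y ^ 2 ∂μ)) μ :=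
    ((hf.integrable_sq.const_mul _).add (integrable_const _)).const_mul _
  refine hbound.mono' (aestronglyMeasurable_ksDensity hf.1) (Eventually.of_forall fun x => ?_)
  have hsq : Integrable (fun y => (f x - f y) ^ 2) μ :=
    ((memLp_const (f x)).sub hf).integrable_sq
  have hsq_le : ∫ y in ball x r, (f x - f y) ^ 2 ∂μ
      ≤ 2 * μ.real Set.univ * f x ^ 2 + 2 * ∫ y, f y ^ 2 ∂μ :=
    calc ∫ y in ball x r, (f x - f y) ^ 2 ∂μ ≤ ∫ y, (f x - f y) ^ 2 ∂μ :=
          setIntegral_le_integral hsq (Eventually.of_forall fun y => sq_nonneg _)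
      _ ≤ ∫ y, (2 * f x ^ 2 + 2 * f y ^ 2) ∂μ :=
          integral_mono hsq ((integrable_const _).add (hf.integrable_sq.const_mul 2))
            fun y => by nlinarith [sq_nonneg (f x + f y)]
      _ = 2 * μ.real Set.univ * f x ^ 2 + 2 * ∫ y, f y ^ 2 ∂μ := by
          rw [integral_add (integrable_const _) (hf.integrable_sq.const_mul 2), integral_const,
            integral_const_mul, smul_eq_mul]
          ring
  rw [Real.norm_of_nonneg (ksDensity_nonneg x), ksDensity_eq]
  exact mul_le_mul (inv_anti₀ hc (hball x)) hsq_le (integral_nonneg fun y => sq_nonneg _)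
    (inv_nonneg.2 hc.le)

theorem sum_integral_sub_setAverage_sq_le [IsFiniteMeasure μ] {ι : Type*} [Fintype ι]
    {A : ι → Set X} {C : ℝ} (hr : r ≠ 0) (hmeas : ∀ i, MeasurableSet (A i))
    (hdisj : Pairwise (Disjoint on A)) (hcover : ⋃ i, A i = Set.univ)
    (hA : ∀ i, 0 < μ.real (A i)) (hsub : ∀ i, ∀ x ∈ A i, A i ⊆ ball x r)
    (hratio : ∀ i, ∀ x ∈ A i, μ.real (ball x r) ≤ C * μ.real (A i)) (hf : MemLp f 2 μ) :
    ∑ i, ∫ x in A i, (f x - ⨍ y in A i, f y ∂μ) ^ 2 ∂μ ≤ C / 2 * r ^ 2 * KSenergy μ f r := by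
  obtain ⟨c, hc, hball⟩ := exists_pos_le_measureReal_ball hcover hA hsub
  have hg := integrable_ksDensity hc hball hf
  calc ∑ i, ∫ x in A i, (f x - ⨍ y in A i, f y ∂μ) ^ 2 ∂μ
      ≤ ∑ i, C / 2 * ∫ x in A i, ksDensity μ f r x ∂μ := Finset.sum_le_sum fun i _ =>
        integral_sub_setAverage_sq_le (hmeas i) (hA i) (hsub i) (hratio i) hf hg.integrableOn
    _ = C / 2 * r ^ 2 * KSenergy μ f r := by
        rw [← Finset.mul_sum, ← integral_iUnion_fintype hmeas hdisj fun i => hg.integrableOn,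
          hcover, setIntegral_univ, integral_ksDensity hr, mul_assoc]

end SecondCountable

end Energy

end KorevaarSchoen

open KorevaarSchoen

theorem stmt7_general {X : Type*} [MetricSpace X] [MeasurableSpace X] [BorelSpace X]
    [CompactSpace X]
    (μ : Measure X) (CD : ℝ) (hCD : 0 < CD)
    (hpos : ∀ (x : X) (r : ℝ), 0 < r → 0 < μ (ball x r))
    (hfin : ∀ (x : X) (r : ℝ), 0 < r → μ (ball x r) < ⊤)
    (hdouble : ∀ (x : X) (r : ℝ), 0 < r →
      μ (ball x (2 * r)) ≤ ENNReal.ofReal CD * μ (ball x r)) :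
    ∀ S : Set (X → ℝ), (∀ f ∈ S, MemLp f 2 μ) →
      (∃ M : ℝ, ∀ f ∈ S, (∫ x, (f x) ^ 2 ∂μ) ≤ M ∧ ∀ r : ℝ, 0 < r → KSenergy μ f r ≤ M) →
      ∀ δ : ℝ, 0 < δ → ∃ T : Set (X → ℝ), T.Finite ∧ T ⊆ S ∧
        ∀ f ∈ S, ∃ g ∈ T, ∫ x, (f x - g x) ^ 2 ∂μ < δ := by
  rintro S hS ⟨M, hM⟩ δ hδ
  have : IsLocallyFiniteMeasure μ :=
    ⟨fun x => ⟨ball x 1, ball_mem_nhds x one_pos, hfin x 1 one_pos⟩⟩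
  obtain ⟨r, hr, hrδ⟩ := exists_pos_mul_sq_lt (3 * CD ^ 4 * M) (half_pos hδ)
  obtain ⟨n, A, hmeas, hdisj, hcover, hA, hsub, hratio⟩ :=
    exists_doubling_partition hCD hpos hdouble hr
  have hvar : ∀ f ∈ S, ∑ i, ∫ x in A i, (f x - ⨍ y in A i, f y ∂μ) ^ 2 ∂μ
      ≤ CD ^ 4 / 2 * r ^ 2 * M := fun f hf =>
    (sum_integral_sub_setAverage_sq_le hr.ne' hmeas hdisj hcover hA hsub hratio (hS f hf)).trans
      (mul_le_mul_of_nonneg_left ((hM f hf).2 r hr) (by positivity))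
  obtain ⟨ε, hε, hεδ⟩ := exists_pos_mul_sq_lt (3 * μ.real Set.univ) (half_pos hδ)
  obtain ⟨T, hTS, hTfin, hT⟩ := exists_finite_subset_dist_lt
    (totallyBounded_image_setAverage hA hS fun f hf => (hM f hf).1) hε
  refine ⟨T, hTfin, hTS, fun f hf => ?_⟩
  obtain ⟨g, hgT, hfg⟩ := hT f hf
  have hclose := integral_sub_sq_le_of_abs_setAverage_sub_le hmeas hdisj hcover (hS f hf)
    (hS g (hTS hgT)) fun i => ((dist_le_pi_dist _ _ i).trans hfg.le)
  refine ⟨g, hgT, ?_⟩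
  linarith [hvar f hf, hvar g (hTS hgT)]

/-- relative compactness of `KS^{1,2}(X)` in `L²(X,μ)`: every
subset bounded in the norm `‖f‖_{L²} + sup_{r>0} E(f,r)^{1/2}` is totally
bounded in `L²(X,μ)`. -/
theorem stmt7 {X : Type*} [MetricSpace X] [MeasurableSpace X] [BorelSpace X]
    [CompactSpace X]
    (μ : Measure X) (CD : ℝ) (hCD : 0 < CD)
    (hpos : ∀ (x : X) (r : ℝ), 0 < r → 0 < μ (ball x r))
    (hfin : ∀ (x : X) (r : ℝ), 0 < r → μ (ball x r) < ⊤)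
    (hdouble : ∀ (x : X) (r : ℝ), 0 < r →
      μ (ball x (2 * r)) ≤ ENNReal.ofReal CD * μ (ball x r))
    (C0 lam : ℝ) (hC0 : 0 < C0) (hlam : 1 ≤ lam)
    (hPI : ∀ f : X → ℝ, (∃ K, LipschitzWith K f) → ∀ (x : X) (R : ℝ), 0 < R →
      ∫ y in ball x R, (f y - ⨍ z in ball x R, f z ∂μ) ^ 2 ∂μ ≤
        C0 * R ^ 2 * ∫ y in ball x (lam * R), (lipConst f y) ^ 2 ∂μ) :
    ∀ S : Set (X → ℝ), (∀ f ∈ S, MemLp f 2 μ) →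
      (∃ M : ℝ, ∀ f ∈ S, (∫ x, (f x) ^ 2 ∂μ) ≤ M ∧ ∀ r : ℝ, 0 < r → KSenergy μ f r ≤ M) →
      ∀ δ : ℝ, 0 < δ → ∃ T : Set (X → ℝ), T.Finite ∧ T ⊆ S ∧
        ∀ f ∈ S, ∃ g ∈ T, ∫ x, (f x - g x) ^ 2 ∂μ < δ :=
  stmt7_general μ CD hCD hpos hfin hdouble
end

section
/- Under the assumptions of the strictly local case (doubling + 2-Poincaré with Lipschitz constants), the intrinsic distance d_E of the limiting Dirichlet form (E, KS^{1,2}(X)), defined by d_E(x,y) = sup{f(x)−f(y) : f ∈ KS^{1,2}(X) ∩ C₀(X), dΓ(f,f) ≤ dμ}, is bi-Lipschitz equivalent to the original distance d: there exists C ≥ 1 with C^{-1} d(x,y) ≤ d_E(x,y) ≤ C d(x,y) for all x,y ∈ X. -/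
/-!
The lower bound: in a complete doubling space closed balls are compact (a maximal `ε`-separated
subset of a ball is finite, by comparing the measures of the disjoint `ε/2`-balls around its
points), so the cone `z ↦ K (d(x,y) - d(z,x))⁺` is an admissible competitor in the definition of
`d_E` as soon as `C0 K² ≤ 1`, and it increases by `K d(x,y)` from `y` to `x`.

The upper bound: an admissible `f` has `Γ f ≤ μ`, so the Poincaré inequality and doubling give
`⨍_B |f - f_B| ≲ R` on every ball `B` of radius `R`. Comparing the averages over the dyadic balls
`B(z, 2⁻ᵏ R)` and summing the geometric series gives `|f z - f_{B(z,R)}| ≲ R` for continuous `f`,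
and two such estimates plus one comparison of ball averages bound `|f x - f y| ≲ d(x,y)`.
-/

open MeasureTheory Metric Filter Topology

open scoped ENNReal NNReal

/-- The intrinsic distance of a Dirichlet form with domain `𝓕` and energy
measures `Γ`: `d_E(x,y) = sup { f(x) - f(y) : f ∈ 𝓕 ∩ C₀(X), dΓ(f,f) ≤ dμ }`. -/
noncomputable def intrinsicDist {X : Type*} [MetricSpace X] [MeasurableSpace X]
    (μ : Measure X) (𝓕 : Set (X → ℝ)) (Γ : (X → ℝ) → Measure X) (x y : X) : ℝ :=
  sSup {t : ℝ | ∃ f ∈ 𝓕, Continuous f ∧ HasCompactSupport f ∧ Γ f ≤ μ ∧ t = f x - f y}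

lemma card_le_of_pairwiseDisjoint_of_measure_le {X ι : Type*} [MeasurableSpace X] {μ : Measure X}
    {T : Finset ι} {s : ι → Set X} {S : Set X} {M : ℝ≥0∞}
    (hdisj : (T : Set ι).PairwiseDisjoint s) (hs : ∀ i ∈ T, MeasurableSet (s i))
    (hsub : ∀ i ∈ T, s i ⊆ S) (hS0 : μ S ≠ 0) (hS : μ S ≠ ⊤) (hM : ∀ i ∈ T, μ S ≤ M * μ (s i)) :
    (T.card : ℝ≥0∞) ≤ M := by
  refine (ENNReal.mul_le_mul_iff_left hS0 hS).1 ?_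
  calc (T.card : ℝ≥0∞) * μ S = ∑ _i ∈ T, μ S := by rw [Finset.sum_const, nsmul_eq_mul]
    _ ≤ ∑ i ∈ T, M * μ (s i) := Finset.sum_le_sum hM
    _ = M * μ (⋃ i ∈ T, s i) := by rw [← Finset.mul_sum, measure_biUnion_finset hdisj hs]
    _ ≤ M * μ S := by gcongr; exact Set.iUnion₂_subset hsub

section Averages

variable {α : Type*} [MeasurableSpace α] {ν : Measure α} {s t : Set α} {f g : α → ℝ}

lemma abs_setAverage_sub_le_s9 (hs0 : ν s ≠ 0) (hs : ν s ≠ ⊤) (hf : IntegrableOn f s ν) (c : ℝ) :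
    |(⨍ x in s, f x ∂ν) - c| ≤ (ν.real s)⁻¹ * ∫ x in s, |f x - c| ∂ν := by
  have hpos : 0 < ν.real s := ENNReal.toReal_pos hs0 hs
  have hsub : (⨍ x in s, f x ∂ν) - c = (ν.real s)⁻¹ * ∫ x in s, (f x - c) ∂ν := by
    rw [integral_sub hf (integrableOn_const hs), setIntegral_const, setAverage_eq, smul_eq_mul,
      smul_eq_mul]
    field_simp
  rw [hsub, abs_mul, abs_of_pos (inv_pos.2 hpos)]
  gcongr
  exact abs_integral_le_integral_abs

lemma abs_setAverage_sub_setAverage_le {M a : ℝ} (hts : t ⊆ s) (ht0 : ν t ≠ 0) (hs : ν s ≠ ⊤)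
    (hf : IntegrableOn f s ν) (ha : 0 ≤ a) (hM : ν.real s ≤ M * ν.real t)
    (hosc : ∫ x in s, |f x - ⨍ y in s, f y ∂ν| ∂ν ≤ a * ν.real s) :
    |(⨍ x in t, f x ∂ν) - ⨍ x in s, f x ∂ν| ≤ M * a := by
  have ht : ν t ≠ ⊤ := ne_top_of_le_ne_top hs (measure_mono hts)
  have htpos : 0 < ν.real t := ENNReal.toReal_pos ht0 ht
  have hmono : ∫ x in t, |f x - ⨍ y in s, f y ∂ν| ∂ν ≤ ∫ x in s, |f x - ⨍ y in s, f y ∂ν| ∂ν :=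
    setIntegral_mono_set (hf.sub (integrableOn_const hs)).abs
      (ae_of_all _ fun _ => abs_nonneg _) hts.eventuallyLE
  calc |(⨍ x in t, f x ∂ν) - ⨍ x in s, f x ∂ν|
      ≤ (ν.real t)⁻¹ * ∫ x in t, |f x - ⨍ y in s, f y ∂ν| ∂ν :=
        abs_setAverage_sub_le_s9 ht0 ht (hf.mono_set hts) _
    _ ≤ (ν.real t)⁻¹ * (a * (M * ν.real t)) := by
        gcongr
        exact hmono.trans (hosc.trans (by gcongr))
    _ = M * a := by field_simp

lemma setIntegral_abs_le_of_setIntegral_sq_le {a : ℝ} (ha : 0 < a) (hs : ν s ≠ ⊤)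
    (hg : IntegrableOn (fun x => g x ^ 2) s ν) (h : ∫ x in s, g x ^ 2 ∂ν ≤ a ^ 2 * ν.real s) :
    ∫ x in s, |g x| ∂ν ≤ a * ν.real s := by
  have hamgm : ∀ x, |g x| ≤ (g x ^ 2 / a + a) / 2 := fun x => by
    rw [← sq_abs (g x), div_add' _ _ _ ha.ne', div_div, le_div_iff₀ (by positivity)]
    nlinarith [sq_nonneg (|g x| - a)]
  calc ∫ x in s, |g x| ∂ν ≤ ∫ x in s, (g x ^ 2 / a + a) / 2 ∂ν :=
        integral_mono_of_nonneg (ae_of_all _ fun x => abs_nonneg _)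
          (((hg.div_const a).add (integrableOn_const hs)).div_const 2) (ae_of_all _ hamgm)
    _ = ((∫ x in s, g x ^ 2 ∂ν) / a + a * ν.real s) / 2 := by
        rw [integral_div, integral_add (hg.div_const a) (integrableOn_const hs), integral_div,
          setIntegral_const, smul_eq_mul, mul_comm]
    _ ≤ a * ν.real s := by
        have : (∫ x in s, g x ^ 2 ∂ν) / a ≤ a * ν.real s := by
          rw [div_le_iff₀ ha]; linarith
        linarith

end Averages

section Metric

variable {X : Type*} [MetricSpace X]

lemma LipschitzWith.lipConst_mem_Icc {f : X → ℝ} {K : ℝ≥0} (hf : LipschitzWith K f) (y : X) :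
    lipConst f y ∈ Set.Icc 0 (K : ℝ) := by
  have hev : ∀ᶠ r in 𝓝[>] (0 : ℝ),
      (⨆ x ∈ closedBall y r, |f x - f y| / r) ∈ Set.Icc 0 (K : ℝ) := by
    refine eventually_nhdsWithin_of_forall fun r (hr : 0 < r) =>
      ⟨Real.iSup_nonneg fun x => Real.iSup_nonneg fun _ => by positivity,
        Real.iSup_le (fun x => Real.iSup_le (fun hx => ?_) K.coe_nonneg) K.coe_nonneg⟩
    rw [div_le_iff₀ hr, ← Real.dist_eq]
    exact (hf.dist_le_mul x y).trans (by gcongr; exact mem_closedBall.1 hx)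
  exact ⟨le_limsup_of_frequently_le (hev.mono fun _ h => h.1).frequently
      (isBoundedUnder_of_eventually_le (hev.mono fun _ h => h.2)),
    limsup_le_of_le (isCoboundedUnder_le_of_eventually_le _ (hev.mono fun _ h => h.1))
      (hev.mono fun _ h => h.2)⟩

lemma exists_lipschitzWith_hasCompactSupport [ProperSpace X] (K : ℝ≥0) (x y : X) :
    ∃ F : X → ℝ, LipschitzWith K F ∧ HasCompactSupport F ∧ F x - F y = K * dist x y := by
  refine ⟨fun z => K * max (dist x y - dist z x) 0, ?_, ?_, by simp [dist_comm y x]⟩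
  · simpa [Function.comp_def] using (lipschitzWith_smul (K : ℝ)).comp
      (((LipschitzWith.const (dist x y)).sub (LipschitzWith.dist_left x)).max_const 0)
  · refine HasCompactSupport.intro (isCompact_closedBall x (dist x y)) fun z hz => ?_
    rw [mem_closedBall, not_le] at hz
    simp [max_eq_right (by linarith : dist x y - dist z x ≤ 0)]

variable [MeasurableSpace X]

def IsDoubling (μ : Measure X) (D : ℝ≥0) : Prop :=
  ∀ (x : X) (r : ℝ), 0 < r → μ (ball x (2 * r)) ≤ D * μ (ball x r)

namespace IsDoubling

variable {μ : Measure X} {D : ℝ≥0}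

lemma measure_ball_two_pow_mul_le (h : IsDoubling μ D) (x : X) {r : ℝ} (hr : 0 < r) (n : ℕ) :
    μ (ball x (2 ^ n * r)) ≤ D ^ n * μ (ball x r) := by
  induction n with
  | zero => simp
  | succ n ih =>
    calc μ (ball x (2 ^ (n + 1) * r)) = μ (ball x (2 * (2 ^ n * r))) := by
          rw [pow_succ', mul_assoc]
      _ ≤ D * μ (ball x (2 ^ n * r)) := h x _ (by positivity)
      _ ≤ D * (D ^ n * μ (ball x r)) := by gcongr
      _ = D ^ (n + 1) * μ (ball x r) := by rw [pow_succ', mul_assoc]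

lemma measure_ball_le (h : IsDoubling μ D) {x y : X} {R r : ℝ} (hr : 0 < r) {n : ℕ}
    (hR : R + dist x y ≤ 2 ^ n * r) : μ (ball x R) ≤ D ^ n * μ (ball y r) :=
  (measure_mono (ball_subset_ball' hR)).trans (h.measure_ball_two_pow_mul_le y hr n)

lemma measureReal_ball_le (h : IsDoubling μ D) {x y : X} {R r : ℝ} (hr : 0 < r)
    (hfin : μ (ball y r) ≠ ⊤) {n : ℕ} (hR : R + dist x y ≤ 2 ^ n * r) :
    μ.real (ball x R) ≤ D ^ n * μ.real (ball y r) := by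
  simpa [measureReal_def] using
    ENNReal.toReal_mono (by finiteness) (h.measure_ball_le hr hR)

variable [OpensMeasurableSpace X]

lemma exists_encard_le_of_isSeparated (h : IsDoubling μ D)
    (hpos : ∀ (x : X) (r : ℝ), 0 < r → 0 < μ (ball x r))
    (hfin : ∀ (x : X) (r : ℝ), 0 < r → μ (ball x r) < ⊤) (x : X) {r : ℝ} (hr : 0 ≤ r)
    {ε : ℝ≥0} (hε : 0 < ε) :
    ∃ N : ℕ, ∀ C ⊆ closedBall x r, IsSeparated ε C → C.encard ≤ N := by
  obtain ⟨m, hm⟩ := pow_unbounded_of_one_lt ((2 * r + 2 * ε) / (ε / 2)) one_lt_two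
  obtain ⟨N, hN⟩ := ENNReal.exists_nat_gt (by finiteness : (D : ℝ≥0∞) ^ m ≠ ⊤)
  have hε2 : (0 : ℝ) < ε / 2 := by positivity
  have hcard : ∀ T : Finset X, (T : Set X) ⊆ closedBall x r → IsSeparated ε (T : Set X) →
      T.card < N := by
    intro T hTx hT
    refine Nat.cast_lt.1 (lt_of_le_of_lt ?_ hN)
    refine card_le_of_pairwiseDisjoint_of_measure_le (s := fun t => ball t (ε / 2))
      (S := ball x (r + ε)) ?_
      (fun _ _ => measurableSet_ball) (fun t ht => ball_subset_ball' ?_)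
      (hpos x _ (by positivity)).ne' (hfin x _ (by positivity)).ne
      (fun t ht => h.measure_ball_le hε2 ?_)
    · intro a ha b hb hab
      refine ball_disjoint_ball ?_
      have hab : (ε : ℝ≥0∞) < edist a b := hT ha hb hab
      rw [edist_nndist, ENNReal.coe_lt_coe, ← NNReal.coe_lt_coe, coe_nndist] at hab
      linarith
    · have := hTx ht; rw [mem_closedBall] at this; linarith
    · have := hTx ht; rw [mem_closedBall, dist_comm] at this
      rw [div_lt_iff₀ hε2] at hm; linarith
  refine ⟨N, fun C hCx hC => ?_⟩
  by_contra! hlt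
  obtain ⟨t, htC, htN⟩ := Set.exists_subset_encard_eq hlt.le
  have htfin : t.Finite := Set.finite_of_encard_eq_coe htN
  have := hcard htfin.toFinset (by simpa using htC.trans hCx) (by simpa using hC.subset htC)
  rw [htfin.encard_eq_coe_toFinset_card, Nat.cast_inj] at htN
  omega

lemma properSpace [CompleteSpace X] (h : IsDoubling μ D)
    (hpos : ∀ (x : X) (r : ℝ), 0 < r → 0 < μ (ball x r))
    (hfin : ∀ (x : X) (r : ℝ), 0 < r → μ (ball x r) < ⊤) : ProperSpace X := by
  refine ⟨fun x r => ?_⟩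
  rcases lt_or_ge r 0 with hr | hr
  · simp [closedBall_eq_empty.2 hr]
  refine (Metric.totallyBounded_iff.2 fun δ hδ => ?_).isCompact_of_isClosed isClosed_closedBall
  set ε : ℝ≥0 := (δ / 2).toNNReal
  have hε : (ε : ℝ) = δ / 2 := Real.coe_toNNReal _ (by positivity)
  obtain ⟨N, hN⟩ := h.exists_encard_le_of_isSeparated hpos hfin x hr (ε := ε)
    (by rw [← NNReal.coe_pos, hε]; positivity)
  have hpack : packingNumber ε (closedBall x r) ≠ ⊤ :=
    ne_top_of_le_ne_top (ENat.natCast_ne_top N) (iSup₂_le fun C hC => iSup_le (hN C hC))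
  refine ⟨_, Set.encard_ne_top_iff.1 (encard_maximalSeparatedSet hpack ▸ hpack), ?_⟩
  refine ((isCover_iff_subset_iUnion_closedBall.1 (isCover_maximalSeparatedSet hpack)).trans ?_)
  exact Set.iUnion₂_mono fun y _ => closedBall_subset_ball (by rw [hε]; linarith)

end IsDoubling

section Oscillation

variable {μ : Measure X} {D : ℝ≥0} {f : X → ℝ}

lemma tendsto_setAverage_ball {z : X} (hf : ContinuousAt f z)
    (hpos : ∀ r : ℝ, 0 < r → μ (ball z r) ≠ 0) (hfin : ∀ r : ℝ, 0 < r → μ (ball z r) ≠ ⊤)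
    (hfi : ∀ r : ℝ, 0 < r → IntegrableOn f (ball z r) μ) :
    Tendsto (fun r => ⨍ x in ball z r, f x ∂μ) (𝓝[>] 0) (𝓝 (f z)) := by
  rw [Metric.tendsto_nhdsWithin_nhds]
  intro ε hε
  obtain ⟨δ, hδ, hfδ⟩ := Metric.continuousAt_iff.1 hf (ε / 2) (half_pos hε)
  refine ⟨δ, hδ, fun r (hr : 0 < r) hrδ => ?_⟩
  rw [Real.dist_0_eq_abs, abs_of_pos hr] at hrδ
  have hint : ∫ x in ball z r, |f x - f z| ∂μ ≤ ε / 2 * μ.real (ball z r) := by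
    refine (le_abs_self _).trans ?_
    rw [← Real.norm_eq_abs]
    refine norm_setIntegral_le_of_norm_le_const (hfin r hr).lt_top fun x hx => ?_
    rw [Real.norm_eq_abs, abs_abs, ← Real.dist_eq]
    exact (hfδ (lt_trans (mem_ball.1 hx) hrδ)).le
  have hBpos : 0 < μ.real (ball z r) := ENNReal.toReal_pos (hpos r hr) (hfin r hr)
  rw [Real.dist_eq]
  calc |(⨍ x in ball z r, f x ∂μ) - f z|
      ≤ (μ.real (ball z r))⁻¹ * ∫ x in ball z r, |f x - f z| ∂μ :=
        abs_setAverage_sub_le_s9 (hpos r hr) (hfin r hr) (hfi r hr) _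
    _ ≤ (μ.real (ball z r))⁻¹ * (ε / 2 * μ.real (ball z r)) := by gcongr
    _ < ε := by field_simp; linarith

lemma IsDoubling.abs_sub_setAverage_ball_le (h : IsDoubling μ D) {z : X} {A R : ℝ} (hR : 0 < R)
    (hA : 0 ≤ A) (hf : ContinuousAt f z)
    (hpos : ∀ r : ℝ, 0 < r → μ (ball z r) ≠ 0) (hfin : ∀ r : ℝ, 0 < r → μ (ball z r) ≠ ⊤)
    (hfi : ∀ r : ℝ, 0 < r → IntegrableOn f (ball z r) μ)
    (hosc : ∀ r : ℝ, 0 < r →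
      ∫ x in ball z r, |f x - ⨍ y in ball z r, f y ∂μ| ∂μ ≤ A * r * μ.real (ball z r)) :
    |f z - ⨍ x in ball z R, f x ∂μ| ≤ 2 * D * A * R := by
  set u : ℕ → ℝ := fun k => ⨍ x in ball z (R / 2 ^ k), f x ∂μ
  have hradii : Tendsto (fun k : ℕ => R / 2 ^ k) atTop (𝓝[>] 0) :=
    tendsto_nhdsWithin_iff.2 ⟨tendsto_const_nhds.div_atTop
      (tendsto_pow_atTop_atTop_of_one_lt one_lt_two), Eventually.of_forall fun k => by
        simp only [Set.mem_Ioi]; positivity⟩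
  have hstep : ∀ k : ℕ, dist (u k) (u (k + 1)) ≤ 2 * D * A * R / 2 / 2 ^ k := by
    intro k
    have hr : 0 < R / 2 ^ (k + 1) := by positivity
    have hr2 : R / 2 ^ k = 2 * (R / 2 ^ (k + 1)) := by rw [pow_succ]; field_simp
    rw [Real.dist_eq, abs_sub_comm]
    refine (abs_setAverage_sub_setAverage_le (ball_subset_ball (by rw [hr2]; linarith))
      (hpos _ hr) (hfin _ (by positivity)) (hfi _ (by positivity)) (by positivity)
      (h.measureReal_ball_le (n := 1) hr (hfin _ hr) (by rw [hr2]; simp))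
      (hosc _ (by positivity))).trans_eq ?_
    field_simp
  have := dist_le_of_le_geometric_two_of_tendsto₀ (hu₂ := hstep)
    ((tendsto_setAverage_ball hf hpos hfin hfi).comp hradii)
  simpa [u, Real.dist_eq, abs_sub_comm] using this

lemma IsDoubling.abs_sub_le_of_poincare (h : IsDoubling μ D)
    (hpos : ∀ (x : X) (r : ℝ), 0 < r → 0 < μ (ball x r))
    (hfin : ∀ (x : X) (r : ℝ), 0 < r → μ (ball x r) < ⊤) (hf : Continuous f)
    (hfi : ∀ (z : X) (r : ℝ), 0 < r → IntegrableOn f (ball z r) μ) {A : ℝ} (hA : 0 ≤ A)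
    (hosc : ∀ (z : X) (r : ℝ), 0 < r →
      ∫ x in ball z r, |f x - ⨍ y in ball z r, f y ∂μ| ∂μ ≤ A * r * μ.real (ball z r))
    (x y : X) : |f x - f y| ≤ (6 * D + 2 * D ^ 2) * A * dist x y := by
  rcases eq_or_ne x y with rfl | hxy
  · simp
  set r := dist x y
  have hr : 0 < r := dist_pos.2 hxy
  have hcenter : ∀ (z : X) (R : ℝ), 0 < R → |f z - ⨍ w in ball z R, f w ∂μ| ≤ 2 * D * A * R :=
    fun z R hR => h.abs_sub_setAverage_ball_le hR hA hf.continuousAt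
      (fun s hs => (hpos z s hs).ne') (fun s hs => (hfin z s hs).ne) (hfi z) (hosc z)
  have hx := hcenter x (2 * r) (by positivity)
  have hy := hcenter y r hr
  have havg :
      |(⨍ w in ball y r, f w ∂μ) - ⨍ w in ball x (2 * r), f w ∂μ| ≤ D ^ 2 * (A * (2 * r)) :=
    abs_setAverage_sub_setAverage_le (ball_subset_ball' (by rw [dist_comm]; linarith))
      (hpos y r hr).ne' (hfin x _ (by positivity)).ne (hfi x _ (by positivity)) (by positivity)
      (h.measureReal_ball_le hr (hfin y r hr).ne (by linarith)) (hosc x _ (by positivity))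
  rw [abs_le] at hx hy havg ⊢
  constructor <;> linarith

end Oscillation

section DirichletForm

variable {μ : Measure X} {𝓕 : Set (X → ℝ)} {Γ : (X → ℝ) → Measure X}

lemma energy_le_of_lipschitzWith {C0 : ℝ} (hC0 : 0 ≤ C0)
    (hΓLip : ∀ f ∈ 𝓕, LocallyLipschitz f →
      Γ f ≤ μ.withDensity (fun x => ENNReal.ofReal (C0 * (lipConst f x) ^ 2)))
    {K : ℝ≥0} (hK : C0 * K ^ 2 ≤ 1) {f : X → ℝ} (hf : f ∈ 𝓕) (hfK : LipschitzWith K f) :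
    Γ f ≤ μ := by
  refine (hΓLip f hf hfK.locallyLipschitz).trans
    ((withDensity_mono (ae_of_all _ fun x => ?_)).trans_eq withDensity_one)
  obtain ⟨h0, hK'⟩ := hfK.lipConst_mem_Icc x
  exact ENNReal.ofReal_le_one.2 ((by gcongr : C0 * lipConst f x ^ 2 ≤ C0 * K ^ 2).trans hK)

lemma intrinsicDist_le {x y : X} {B : ℝ} (hB : 0 ≤ B)
    (h : ∀ f ∈ 𝓕, Continuous f → HasCompactSupport f → Γ f ≤ μ → f x - f y ≤ B) :
    intrinsicDist μ 𝓕 Γ x y ≤ B :=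
  Real.sSup_le (by rintro _ ⟨f, hf, hfc, hfs, hfΓ, rfl⟩; exact h f hf hfc hfs hfΓ) hB

lemma sub_le_intrinsicDist {x y : X} {B : ℝ}
    (h : ∀ g ∈ 𝓕, Continuous g → HasCompactSupport g → Γ g ≤ μ → g x - g y ≤ B) {f : X → ℝ}
    (hf : f ∈ 𝓕) (hfc : Continuous f) (hfs : HasCompactSupport f) (hfΓ : Γ f ≤ μ) :
    f x - f y ≤ intrinsicDist μ 𝓕 Γ x y :=
  le_csSup ⟨B, by rintro _ ⟨g, hg, hgc, hgs, hgΓ, rfl⟩; exact h g hg hgc hgs hgΓ⟩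
    ⟨f, hf, hfc, hfs, hfΓ, rfl⟩

lemma mul_dist_le_intrinsicDist [ProperSpace X] {C0 : ℝ} (hC0 : 0 ≤ C0)
    (hΓLip : ∀ f ∈ 𝓕, LocallyLipschitz f →
      Γ f ≤ μ.withDensity (fun x => ENNReal.ofReal (C0 * (lipConst f x) ^ 2)))
    (hLipDom : ∀ (f : X → ℝ) (K : ℝ≥0), LipschitzWith K f → HasCompactSupport f → f ∈ 𝓕)
    {K : ℝ≥0} (hK : C0 * K ^ 2 ≤ 1) {x y : X} {B : ℝ}
    (h : ∀ g ∈ 𝓕, Continuous g → HasCompactSupport g → Γ g ≤ μ → g x - g y ≤ B) :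
    K * dist x y ≤ intrinsicDist μ 𝓕 Γ x y := by
  obtain ⟨F, hFK, hFs, hFxy⟩ := exists_lipschitzWith_hasCompactSupport K x y
  have hF := hLipDom F K hFK hFs
  exact hFxy ▸ sub_le_intrinsicDist h hF hFK.continuous hFs
    (energy_le_of_lipschitzWith hC0 hΓLip hK hF hFK)

end DirichletForm

lemma IsDoubling.sub_le_mul_dist_of_poincare [OpensMeasurableSpace X] {μ : Measure X} {D : ℝ≥0}
    (h : IsDoubling μ D) (hD : 0 < D)
    (hpos : ∀ (x : X) (r : ℝ), 0 < r → 0 < μ (ball x r))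
    (hfin : ∀ (x : X) (r : ℝ), 0 < r → μ (ball x r) < ⊤)
    {C0 Lam : ℝ} (hC0 : 0 < C0) {m : ℕ} (hm : Lam ≤ 2 ^ m) {ν : Measure X} (hν : ν ≤ μ)
    {f : X → ℝ} (hf : Continuous f) (hfs : HasCompactSupport f)
    (hPI : ∀ (z : X) (R : ℝ), 0 < R →
      ∫ y in ball z R, (f y - ⨍ w in ball z R, f w ∂μ) ^ 2 ∂μ ≤
        C0 * R ^ 2 * (ν (ball z (Lam * R))).toReal)
    (x y : X) : f x - f y ≤ (6 * D + 2 * D ^ 2) * √(C0 * D ^ m) * dist x y := by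
  obtain ⟨M, hM⟩ := hfs.exists_bound_of_continuous hf
  set A := √(C0 * D ^ m)
  have hA : 0 < A := by positivity
  have hfi : ∀ (z : X) (R : ℝ), 0 < R → IntegrableOn f (ball z R) μ := fun z R hR =>
    Measure.integrableOn_of_bounded (hfin z R hR).ne hf.aestronglyMeasurable (ae_of_all _ hM)
  have hosc : ∀ (z : X) (R : ℝ), 0 < R →
      ∫ x in ball z R, |f x - ⨍ y in ball z R, f y ∂μ| ∂μ ≤ A * R * μ.real (ball z R) := by
    intro z R hR
    set c := ⨍ y in ball z R, f y ∂μ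
    have hsq : IntegrableOn (fun x => (f x - c) ^ 2) (ball z R) μ :=
      Measure.integrableOn_of_bounded (M := (M + |c|) ^ 2) (hfin z R hR).ne
        ((hf.sub continuous_const).pow 2).aestronglyMeasurable (ae_of_all _ fun x => by
          rw [Real.norm_eq_abs, abs_pow]
          gcongr
          exact (abs_sub _ _).trans (by gcongr; exact Real.norm_eq_abs _ ▸ hM x))
    have hΓ : (ν (ball z (Lam * R))).toReal ≤ D ^ m * μ.real (ball z R) := by
      simpa [measureReal_def] using ENNReal.toReal_mono
        (ENNReal.mul_ne_top (by simp) (hfin z R hR).ne)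
        ((hν _).trans (h.measure_ball_le hR (n := m) (by simp; gcongr)))
    refine setIntegral_abs_le_of_setIntegral_sq_le (by positivity) (hfin z R hR).ne hsq
      ((hPI z R hR).trans ?_)
    calc C0 * R ^ 2 * (ν (ball z (Lam * R))).toReal
        ≤ C0 * R ^ 2 * (D ^ m * μ.real (ball z R)) := by gcongr
      _ = (A * R) ^ 2 * μ.real (ball z R) := by
          rw [mul_pow, Real.sq_sqrt (by positivity)]; ring
  exact (le_abs_self _).trans (h.abs_sub_le_of_poincare hpos hfin hf hfi hA.le hosc x y)

end Metric

theorem stmt9_general {X : Type*} [MetricSpace X] [MeasurableSpace X] [BorelSpace X]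
    [CompleteSpace X]
    (μ : Measure X) (CD : ℝ) (hCD : 0 < CD)
    (hpos : ∀ (x : X) (r : ℝ), 0 < r → 0 < μ (ball x r))
    (hfin : ∀ (x : X) (r : ℝ), 0 < r → μ (ball x r) < ⊤)
    (hdouble : ∀ (x : X) (r : ℝ), 0 < r →
      μ (ball x (2 * r)) ≤ ENNReal.ofReal CD * μ (ball x r))
    (𝓕 : Set (X → ℝ)) (Γ : (X → ℝ) → Measure X)
    (C0 Lam : ℝ) (hC0 : 0 < C0)
    -- 2-Poincaré inequality with respect to the energy measures
    (hPIΓ : ∀ f ∈ 𝓕, ∀ (x : X) (R : ℝ), 0 < R →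
      ∫ y in ball x R, (f y - ⨍ z in ball x R, f z ∂μ) ^ 2 ∂μ ≤
        C0 * R ^ 2 * (Γ f (ball x (Lam * R))).toReal)
    -- domination of the energy measure by the Lipschitz constant
    (hΓLip : ∀ f ∈ 𝓕, LocallyLipschitz f →
      Γ f ≤ μ.withDensity (fun x => ENNReal.ofReal (C0 * (lipConst f x) ^ 2)))
    -- compactly supported Lipschitz functions belong to the domain
    (hLipDom : ∀ (f : X → ℝ) (K : NNReal), LipschitzWith K f → HasCompactSupport f →
      f ∈ 𝓕) :
    ∃ C : ℝ, 1 ≤ C ∧ ∀ x y : X,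
      C⁻¹ * dist x y ≤ intrinsicDist μ 𝓕 Γ x y ∧
        intrinsicDist μ 𝓕 Γ x y ≤ C * dist x y := by
  -- `ENNReal.ofReal CD` is by definition `↑CD.toNNReal`
  have hD : IsDoubling μ CD.toNNReal := hdouble
  have : ProperSpace X := hD.properSpace hpos hfin
  obtain ⟨m, hm⟩ := pow_unbounded_of_one_lt Lam one_lt_two
  set Cup : ℝ := (6 * CD.toNNReal + 2 * CD.toNNReal ^ 2) * √(C0 * CD.toNNReal ^ m)
  have hupper : ∀ x y : X, ∀ f ∈ 𝓕, Continuous f → HasCompactSupport f → Γ f ≤ μ →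
      f x - f y ≤ Cup * dist x y := fun x y f hf hfc hfs hfΓ =>
    hD.sub_le_mul_dist_of_poincare (Real.toNNReal_pos.2 hCD) hpos hfin hC0 hm.le hfΓ hfc hfs
      (hPIΓ f hf) x y
  set K : ℝ≥0 := ⟨(√C0)⁻¹, by positivity⟩
  have hK_coe : (K : ℝ) = (√C0)⁻¹ := rfl
  have hK0 : 0 < (K : ℝ) := by rw [hK_coe]; positivity
  have hK : C0 * K ^ 2 ≤ 1 := by
    rw [hK_coe, inv_pow, Real.sq_sqrt hC0.le, mul_inv_cancel₀ hC0.ne']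
  refine ⟨max (max (K : ℝ)⁻¹ Cup) 1, le_max_right _ _, fun x y => ⟨?_, ?_⟩⟩
  · have hCK : (max (max (K : ℝ)⁻¹ Cup) 1)⁻¹ ≤ K :=
      inv_le_of_inv_le₀ hK0 ((le_max_left _ _).trans (le_max_left _ _))
    exact (mul_le_mul_of_nonneg_right hCK dist_nonneg).trans
      (mul_dist_le_intrinsicDist hC0.le hΓLip hLipDom hK (hupper x y))
  · refine (intrinsicDist_le (by positivity) (hupper x y)).trans ?_
    gcongr
    exact (le_max_right _ _).trans (le_max_left _ _)

/-- the intrinsic distance of the limiting Dirichlet form is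
bi-Lipschitz equivalent to the original distance. -/
theorem stmt9 {X : Type*} [MetricSpace X] [MeasurableSpace X] [BorelSpace X]
    [LocallyCompactSpace X] [CompleteSpace X]
    (μ : Measure X) (CD : ℝ) (hCD : 0 < CD)
    (hpos : ∀ (x : X) (r : ℝ), 0 < r → 0 < μ (ball x r))
    (hfin : ∀ (x : X) (r : ℝ), 0 < r → μ (ball x r) < ⊤)
    (hdouble : ∀ (x : X) (r : ℝ), 0 < r →
      μ (ball x (2 * r)) ≤ ENNReal.ofReal CD * μ (ball x r))
    (𝓕 : Set (X → ℝ)) (Γ : (X → ℝ) → Measure X)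
    (C0 Lam : ℝ) (hC0 : 0 < C0) (hLam : 1 < Lam)
    -- 2-Poincaré inequality with respect to the energy measures
    (hPIΓ : ∀ f ∈ 𝓕, ∀ (x : X) (R : ℝ), 0 < R →
      ∫ y in ball x R, (f y - ⨍ z in ball x R, f z ∂μ) ^ 2 ∂μ ≤
        C0 * R ^ 2 * (Γ f (ball x (Lam * R))).toReal)
    -- domination of the energy measure by the Lipschitz constant
    (hΓLip : ∀ f ∈ 𝓕, LocallyLipschitz f →
      Γ f ≤ μ.withDensity (fun x => ENNReal.ofReal (C0 * (lipConst f x) ^ 2)))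
    -- compactly supported Lipschitz functions belong to the domain
    (hLipDom : ∀ (f : X → ℝ) (K : NNReal), LipschitzWith K f → HasCompactSupport f →
      f ∈ 𝓕) :
    ∃ C : ℝ, 1 ≤ C ∧ ∀ x y : X,
      C⁻¹ * dist x y ≤ intrinsicDist μ 𝓕 Γ x y ∧
        intrinsicDist μ 𝓕 Γ x y ≤ C * dist x y :=
  stmt9_general μ CD hCD hpos hfin hdouble 𝓕 Γ C0 Lam hC0 hPIΓ hΓLip hLipDom
end

section
/- 2-Poincaré inequality for the energy measure in the fractal case: under the standing assumptions (compact doubling space, 2-Poincaré with Korevaar-Schoen energies, controlled cutoffs) and given the strongly local Dirichlet form (E, KS^{d_w/2,2}(X)) with C₁ sup_{r>0} E_{d_w/2,X}(f,r) ≤ E(f,f) ≤ C₂ liminf_{r→0⁺} E_{d_w/2,X}(f,r) and the localized bound limsup_{r→0⁺} r^{-d_w} ∫_{B(x,R)} ⨍_{B(z,r)} |f(z)−f(y)|² dμ(y) dμ(z) ≤ C ∫_{B(x,λR)} dΓ(f,f), there exist C > 0 and Λ > 1 such that ∫_{B(x,R)} |f − f_{B(x,R)}|² dμ ≤ C R^{d_w}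 ∫_{B(x,ΛR)} dΓ(f,f) for all f ∈ KS^{d_w/2,2}(X), x ∈ X, R > 0. -/
open MeasureTheory Metric Filter Topology

/-- The Korevaar–Schoen energy `E_{d_w/2,U}(f,r)` at scale `r` on `U`. -/
noncomputable def KSE {X : Type*} [MetricSpace X] [MeasurableSpace X]
    (μ : Measure X) (dw : ℝ) (f : X → ℝ) (U : Set X) (r : ℝ) : ℝ :=
  ∫ x in U, (⨍ y in ball x r, (f y - f x) ^ 2 ∂μ) / r ^ dw ∂μ

/-!
The standing Poincaré inequality on `B(x, 2R)` bounds the variance on `B(x, R)` by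
`R^{d_w}` times the `liminf` of the localized Korevaar–Schoen energies on `B(x, 2λR)`.
These energies are bounded by the global ones, hence by `E(f,f)/C₁`, so their `liminf` is at
most their `limsup`, which the localized bound controls by `Γ(f,f)(B(x, 2λ₀λR))`.
-/

section Variance

variable {α : Type*} [MeasurableSpace α] {μ : Measure α} {f : α → ℝ}

lemma integral_sq_sub_average_le [IsFiniteMeasure μ] (hf : MemLp f 2 μ) (c : ℝ) :
    ∫ y, (f y - ⨍ z, f z ∂μ) ^ 2 ∂μ ≤ ∫ y, (f y - c) ^ 2 ∂μ := by
  set m := ⨍ z, f z ∂μ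
  have hf1 : Integrable f μ := hf.integrable one_le_two
  have hsq : Integrable (fun y => (f y - m) ^ 2) μ := (hf.sub (memLp_const m)).integrable_sq
  have hlin : Integrable (fun y => 2 * (m - c) * (f y - m)) μ :=
    (hf1.sub (integrable_const m)).const_mul _
  have hmean : ∫ y, (f y - m) ∂μ = 0 := by
    rw [integral_sub hf1 (integrable_const m), integral_const, measure_smul_average, sub_self]
  have hsplit :
      ∫ y, (f y - c) ^ 2 ∂μ = ∫ y, (f y - m) ^ 2 ∂μ + (m - c) ^ 2 * μ.real Set.univ :=
    calc ∫ y, (f y - c) ^ 2 ∂μ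
        = ∫ y, ((f y - m) ^ 2 + 2 * (m - c) * (f y - m) + (m - c) ^ 2) ∂μ := by
          congr 1; ext y; ring
      _ = _ := by
          rw [integral_add (f := fun y => (f y - m) ^ 2 + 2 * (m - c) * (f y - m)) (hsq.add hlin)
              (integrable_const _), integral_add hsq hlin,
            integral_const_mul, hmean, integral_const, smul_eq_mul]
          ring
  rw [hsplit]
  exact le_add_of_nonneg_right (by positivity)

lemma setIntegral_sq_sub_setAverage_mono {s t : Set α} (hst : s ⊆ t) (ht : μ t ≠ ⊤)
    (hf : MemLp f 2 (μ.restrict t)) :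
    ∫ y in s, (f y - ⨍ z in s, f z ∂μ) ^ 2 ∂μ ≤
      ∫ y in t, (f y - ⨍ z in t, f z ∂μ) ^ 2 ∂μ := by
  have : IsFiniteMeasure (μ.restrict t) := isFiniteMeasure_restrict.2 ht
  have : IsFiniteMeasure (μ.restrict s) :=
    isFiniteMeasure_restrict.2 (measure_ne_top_of_subset hst ht)
  calc ∫ y in s, (f y - ⨍ z in s, f z ∂μ) ^ 2 ∂μ
      ≤ ∫ y in s, (f y - ⨍ z in t, f z ∂μ) ^ 2 ∂μ :=
        integral_sq_sub_average_le (hf.mono_measure (Measure.restrict_mono hst le_rfl)) _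
    _ ≤ ∫ y in t, (f y - ⨍ z in t, f z ∂μ) ^ 2 ∂μ :=
        setIntegral_mono_set (hf.sub (memLp_const _)).integrable_sq
          (Eventually.of_forall fun y => sq_nonneg _) hst.eventuallyLE

end Variance

section MeasureOfBalls

variable {X : Type*} [MetricSpace X] [MeasurableSpace X]

lemma isOpenPosMeasure_of_measure_ball_pos {μ : Measure X}
    (hpos : ∀ (x : X) (r : ℝ), 0 < r → 0 < μ (ball x r)) :
    μ.IsOpenPosMeasure where
  open_pos _ hU := fun ⟨x, hx⟩ =>
    let ⟨ε, hε, hεU⟩ := Metric.isOpen_iff.1 hU x hx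
    ((hpos x ε hε).trans_le (measure_mono hεU)).ne'

lemma isFiniteMeasure_of_measure_ball_lt_top [CompactSpace X] [Nonempty X] {μ : Measure X}
    (hfin : ∀ (x : X) (r : ℝ), 0 < r → μ (ball x r) < ⊤) : IsFiniteMeasure μ := by
  obtain ⟨x⟩ := ‹Nonempty X›
  obtain ⟨R, hR, hball⟩ := (isCompact_univ (X := X)).isBounded.subset_ball_lt 0 x
  exact ⟨(measure_mono hball).trans_lt (hfin x R hR)⟩

lemma exists_pos_le_measureReal_ball [CompactSpace X] (μ : Measure X) [IsFiniteMeasure μ]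
    [μ.IsOpenPosMeasure] {r : ℝ} (hr : 0 < r) : ∃ c > 0, ∀ x, c ≤ μ.real (ball x r) := by
  obtain ⟨t, -, ht, hcover⟩ :=
    finite_cover_balls_of_compact (isCompact_univ (X := X)) (half_pos hr)
  have hsmall :
      ∀ᶠ c in 𝓝[>] (0 : ℝ), 0 < c ∧ ∀ i ∈ t, c ≤ μ.real (ball i (r / 2)) := by
    refine (eventually_mem_nhdsWithin (a := (0 : ℝ)) (s := Set.Ioi 0)).and
      ((eventually_all_finite ht).2 fun i _ => ?_)
    exact nhdsWithin_le_nhds <| eventually_le_nhds <|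
      ENNReal.toReal_pos (measure_ball_pos μ i (half_pos hr)).ne' (measure_ne_top μ _)
  obtain ⟨c, hc, hct⟩ := hsmall.exists
  refine ⟨c, hc, fun x => ?_⟩
  obtain ⟨i, hi, hxi⟩ := Set.mem_iUnion₂.1 (hcover (Set.mem_univ x))
  refine (hct i hi).trans (measureReal_mono (ball_subset_ball' ?_))
  rw [dist_comm]
  linarith [mem_ball.1 hxi]

end MeasureOfBalls

section KorevaarSchoen

variable {X : Type*} [MetricSpace X] [MeasurableSpace X] (μ : Measure X) (dw : ℝ)

noncomputable def KSEIntegrand (f : X → ℝ) (r : ℝ) (x : X) : ℝ :=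
  (⨍ y in ball x r, (f y - f x) ^ 2 ∂μ) / r ^ dw

lemma KSE_eq_setIntegral (f : X → ℝ) (U : Set X) (r : ℝ) :
    KSE μ dw f U r = ∫ x in U, KSEIntegrand μ dw f r x ∂μ := rfl

variable {μ dw} {f g : X → ℝ} {r : ℝ}

lemma KSEIntegrand_nonneg (hr : 0 ≤ r) (x : X) : 0 ≤ KSEIntegrand μ dw f r x := by
  rw [KSEIntegrand, setAverage_eq]
  exact div_nonneg (smul_nonneg (by positivity) (integral_nonneg fun y => sq_nonneg _))
    (Real.rpow_nonneg hr _)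

lemma KSE_nonneg (U : Set X) (hr : 0 ≤ r) : 0 ≤ KSE μ dw f U r :=
  integral_nonneg (KSEIntegrand_nonneg hr)

lemma KSEIntegrand_ae_eq (hfg : f =ᵐ[μ] g) :
    KSEIntegrand μ dw f r =ᵐ[μ] KSEIntegrand μ dw g r := by
  filter_upwards [hfg] with x hx
  have hsq : (fun y => (f y - f x) ^ 2) =ᵐ[μ.restrict (ball x r)] fun y => (g y - g x) ^ 2 := by
    filter_upwards [ae_restrict_of_ae hfg] with y hy
    rw [hy, hx]
  rw [KSEIntegrand, KSEIntegrand, average_congr hsq]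

lemma stronglyMeasurable_KSEIntegrand [SecondCountableTopology X] [OpensMeasurableSpace X]
    [SFinite μ] (hf : Measurable f) : StronglyMeasurable (KSEIntegrand μ dw f r) := by
  have hnear : MeasurableSet {p : X × X | dist p.2 p.1 < r} :=
    measurableSet_lt (measurable_snd.dist measurable_fst) measurable_const
  have hmass : Measurable fun x => μ (ball x r) := measurable_measure_prodMk_left hnear
  have hint : StronglyMeasurable fun x => ∫ y in ball x r, (f y - f x) ^ 2 ∂μ := by
    simp_rw [← integral_indicator measurableSet_ball]
    refine StronglyMeasurable.integral_prod_right' (f := {p : X × X | dist p.2 p.1 < r}.indicator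
      fun p => (f p.2 - f p.1) ^ 2) ?_
    exact (((hf.comp measurable_snd).sub (hf.comp measurable_fst)).pow_const 2).indicator
      hnear |>.stronglyMeasurable
  unfold KSEIntegrand
  simp_rw [setAverage_eq, measureReal_def, smul_eq_mul]
  exact ((hmass.ennreal_toReal.inv.mul hint.measurable).div_const _).stronglyMeasurable

lemma KSEIntegrand_le [IsFiniteMeasure μ] (hf : MemLp f 2 μ) (hr : 0 < r) {c : ℝ} (hc : 0 < c)
    {x : X} (hcx : c ≤ μ.real (ball x r)) :
    KSEIntegrand μ dw f r x ≤
      (2 * ∫ y, f y ^ 2 ∂μ + 2 * μ.real Set.univ * f x ^ 2) / c / r ^ dw := by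
  have hf2 : Integrable (fun y => f y ^ 2) μ := hf.integrable_sq
  have hdom : Integrable (fun y => 2 * f y ^ 2 + 2 * f x ^ 2) μ :=
    (hf2.const_mul 2).add (integrable_const _)
  have hsq_le : ∀ y, (f y - f x) ^ 2 ≤ 2 * f y ^ 2 + 2 * f x ^ 2 := fun y => by
    nlinarith [sq_nonneg (f y + f x)]
  have hball : ∫ y in ball x r, (f y - f x) ^ 2 ∂μ ≤
      2 * ∫ y, f y ^ 2 ∂μ + 2 * μ.real Set.univ * f x ^ 2 :=
    calc ∫ y in ball x r, (f y - f x) ^ 2 ∂μ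
        ≤ ∫ y in ball x r, (2 * f y ^ 2 + 2 * f x ^ 2) ∂μ :=
          setIntegral_mono ((hf.sub (memLp_const _)).integrable_sq).integrableOn
            hdom.integrableOn hsq_le
      _ ≤ ∫ y, (2 * f y ^ 2 + 2 * f x ^ 2) ∂μ :=
          setIntegral_le_integral hdom (Eventually.of_forall fun y => by positivity)
      _ = 2 * ∫ y, f y ^ 2 ∂μ + 2 * μ.real Set.univ * f x ^ 2 := by
          rw [integral_add (hf2.const_mul 2) (integrable_const _), integral_const_mul,
            integral_const, smul_eq_mul]
          ring
  rw [KSEIntegrand, setAverage_eq, smul_eq_mul, ← div_eq_inv_mul]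
  gcongr

variable [CompactSpace X] [BorelSpace X] [IsFiniteMeasure μ] [μ.IsOpenPosMeasure]

lemma integrable_KSEIntegrand (hf : MemLp f 2 μ) (hr : 0 < r) :
    Integrable (KSEIntegrand μ dw f r) μ := by
  obtain ⟨c, hc, hcx⟩ := exists_pos_le_measureReal_ball μ hr
  set g := hf.1.mk f
  have hg : MemLp g 2 μ := hf.ae_eq hf.1.ae_eq_mk
  have hdom : Integrable
      (fun x => (2 * ∫ y, g y ^ 2 ∂μ + 2 * μ.real Set.univ * g x ^ 2) / c / r ^ dw) μ :=
    (((integrable_const _).add (hg.integrable_sq.const_mul _)).div_const _).div_const _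
  refine (hdom.mono' (stronglyMeasurable_KSEIntegrand hf.1.measurable_mk).aestronglyMeasurable
    (Eventually.of_forall fun x => ?_)).congr (KSEIntegrand_ae_eq hf.1.ae_eq_mk).symm
  rw [Real.norm_of_nonneg (KSEIntegrand_nonneg hr.le x)]
  exact KSEIntegrand_le hg hr hc (hcx x)

lemma KSE_le_KSE_univ (hf : MemLp f 2 μ) (hr : 0 < r) (U : Set X) :
    KSE μ dw f U r ≤ KSE μ dw f Set.univ r := by
  rw [KSE_eq_setIntegral, KSE_eq_setIntegral, Measure.restrict_univ]
  exact setIntegral_le_integral (integrable_KSEIntegrand hf hr)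
    (Eventually.of_forall (KSEIntegrand_nonneg hr.le))

end KorevaarSchoen

theorem stmt17_general {X : Type*} [MetricSpace X] [MeasurableSpace X] [BorelSpace X]
    [CompactSpace X]
    (μ : Measure X)
    (hpos : ∀ (x : X) (r : ℝ), 0 < r → 0 < μ (ball x r))
    (hfin : ∀ (x : X) (r : ℝ), 0 < r → μ (ball x r) < ⊤)
    (dw : ℝ)
    (𝓚𝓢 : Set (X → ℝ))
    (hKSdef : ∀ f : X → ℝ, f ∈ 𝓚𝓢 ↔ MemLp f 2 μ ∧
      Filter.IsBoundedUnder (· ≤ ·) (𝓝[>] (0 : ℝ)) (fun r => KSE μ dw f Set.univ r))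
    (Eform : (X → ℝ) → ℝ) (Γ : (X → ℝ) → Measure X)
    (C₁ : ℝ) (hC₁ : 0 < C₁)
    (hlower : ∀ f ∈ 𝓚𝓢, ∀ r : ℝ, 0 < r → C₁ * KSE μ dw f Set.univ r ≤ Eform f)
    (C₀ lam₀ : ℝ) (hC₀ : 0 < C₀) (hlam₀ : 1 ≤ lam₀)
    -- localized bound: the limsup of localized energies is controlled by `Γ`
    (hloc : ∀ f ∈ 𝓚𝓢, ∀ (x : X) (R : ℝ), 0 < R →
      Filter.limsup (fun r => KSE μ dw f (ball x R) r) (𝓝[>] (0 : ℝ)) ≤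
        C₀ * (Γ f (ball x (lam₀ * R))).toReal)
    (C lam : ℝ) (hC : 0 < C) (hlam : 1 ≤ lam)
    -- standing 2-Poincaré inequality with Korevaar–Schoen energies
    (hPI : ∀ f ∈ 𝓚𝓢, ∀ (x : X) (R : ℝ), 0 < R →
      ∫ y in ball x R, (f y - ⨍ z in ball x R, f z ∂μ) ^ 2 ∂μ ≤
        C * R ^ dw *
          Filter.liminf (fun r => KSE μ dw f (ball x (lam * R)) r) (𝓝[>] (0 : ℝ))) :
    ∃ C' Λ : ℝ, 0 < C' ∧ 1 < Λ ∧ ∀ f ∈ 𝓚𝓢, ∀ (x : X) (R : ℝ), 0 < R →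
      ∫ y in ball x R, (f y - ⨍ z in ball x R, f z ∂μ) ^ 2 ∂μ ≤
        C' * R ^ dw * (Γ f (ball x (Λ * R))).toReal := by
  -- Enlarging the ball on the left (`R ↦ 2R`) is what makes `Λ > 1`; enlarging it on the right
  -- is not monotone, as `Γ f` may be infinite and `toReal ⊤ = 0`.
  refine ⟨C * 2 ^ dw * C₀, 2 * lam₀ * lam, by positivity, by nlinarith, ?_⟩
  intro f hf x R hR
  have : Nonempty X := ⟨x⟩
  have : IsFiniteMeasure μ := isFiniteMeasure_of_measure_ball_lt_top hfin
  have : μ.IsOpenPosMeasure := isOpenPosMeasure_of_measure_ball_pos hpos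
  have hf2 : MemLp f 2 μ := ((hKSdef f).1 hf).1
  have hliminf : liminf (fun r => KSE μ dw f (ball x (lam * (2 * R))) r) (𝓝[>] 0) ≤
      C₀ * (Γ f (ball x (2 * lam₀ * lam * R))).toReal := by
    have hradius : lam₀ * (lam * (2 * R)) = 2 * lam₀ * lam * R := by ring
    refine (liminf_le_limsup ?_ ?_).trans (hradius ▸ hloc f hf x _ (by positivity))
    · refine isBoundedUnder_of_eventually_le (a := Eform f / C₁)
        (eventually_nhdsWithin_of_forall fun r hr => ?_)
      exact (KSE_le_KSE_univ hf2 hr _).trans ((le_div_iff₀' hC₁).2 (hlower f hf r hr))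
    · exact isBoundedUnder_of_eventually_ge (a := 0)
        (eventually_nhdsWithin_of_forall fun r hr => KSE_nonneg _ (le_of_lt hr))
  calc ∫ y in ball x R, (f y - ⨍ z in ball x R, f z ∂μ) ^ 2 ∂μ
      ≤ ∫ y in ball x (2 * R), (f y - ⨍ z in ball x (2 * R), f z ∂μ) ^ 2 ∂μ :=
        setIntegral_sq_sub_setAverage_mono (ball_subset_ball (by linarith)) (measure_ne_top _ _)
          (hf2.restrict _)
    _ ≤ C * (2 * R) ^ dw * liminf (fun r => KSE μ dw f (ball x (lam * (2 * R))) r) (𝓝[>] 0) :=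
        hPI f hf x (2 * R) (by positivity)
    _ ≤ C * (2 * R) ^ dw * (C₀ * (Γ f (ball x (2 * lam₀ * lam * R))).toReal) := by gcongr
    _ = C * 2 ^ dw * C₀ * R ^ dw * (Γ f (ball x (2 * lam₀ * lam * R))).toReal := by
        rw [Real.mul_rpow zero_le_two hR.le]
        ring

/-- 2-Poincaré inequality for the energy measure in the fractal
case: `∫_{B(x,R)} |f - f_{B(x,R)}|² dμ ≤ C R^{d_w} Γ(f,f)(B(x,ΛR))`. -/
theorem stmt17 {X : Type*} [MetricSpace X] [MeasurableSpace X] [BorelSpace X]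
    [CompactSpace X]
    (μ : Measure X) (CD : ℝ) (hCD : 0 < CD)
    (hpos : ∀ (x : X) (r : ℝ), 0 < r → 0 < μ (ball x r))
    (hfin : ∀ (x : X) (r : ℝ), 0 < r → μ (ball x r) < ⊤)
    (hdouble : ∀ (x : X) (r : ℝ), 0 < r →
      μ (ball x (2 * r)) ≤ ENNReal.ofReal CD * μ (ball x r))
    (dw : ℝ) (hdw : 2 < dw)
    (𝓚𝓢 : Set (X → ℝ))
    (hKSdef : ∀ f : X → ℝ, f ∈ 𝓚𝓢 ↔ MemLp f 2 μ ∧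
      Filter.IsBoundedUnder (· ≤ ·) (𝓝[>] (0 : ℝ)) (fun r => KSE μ dw f Set.univ r))
    (Eform : (X → ℝ) → ℝ) (Γ : (X → ℝ) → Measure X)
    (C₁ C₂ : ℝ) (hC₁ : 0 < C₁) (hC₂ : 0 < C₂)
    (hlower : ∀ f ∈ 𝓚𝓢, ∀ r : ℝ, 0 < r → C₁ * KSE μ dw f Set.univ r ≤ Eform f)
    (hupper : ∀ f ∈ 𝓚𝓢,
      Eform f ≤ C₂ * Filter.liminf (fun r => KSE μ dw f Set.univ r) (𝓝[>] (0 : ℝ)))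
    (C₀ lam₀ : ℝ) (hC₀ : 0 < C₀) (hlam₀ : 1 ≤ lam₀)
    -- localized bound: the limsup of localized energies is controlled by `Γ`
    (hloc : ∀ f ∈ 𝓚𝓢, ∀ (x : X) (R : ℝ), 0 < R →
      Filter.limsup (fun r => KSE μ dw f (ball x R) r) (𝓝[>] (0 : ℝ)) ≤
        C₀ * (Γ f (ball x (lam₀ * R))).toReal)
    (C lam : ℝ) (hC : 0 < C) (hlam : 1 ≤ lam)
    -- standing 2-Poincaré inequality with Korevaar–Schoen energies
    (hPI : ∀ f ∈ 𝓚𝓢, ∀ (x : X) (R : ℝ), 0 < R →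
      ∫ y in ball x R, (f y - ⨍ z in ball x R, f z ∂μ) ^ 2 ∂μ ≤
        C * R ^ dw *
          Filter.liminf (fun r => KSE μ dw f (ball x (lam * R)) r) (𝓝[>] (0 : ℝ))) :
    ∃ C' Λ : ℝ, 0 < C' ∧ 1 < Λ ∧ ∀ f ∈ 𝓚𝓢, ∀ (x : X) (R : ℝ), 0 < R →
      ∫ y in ball x R, (f y - ⨍ z in ball x R, f z ∂μ) ^ 2 ∂μ ≤
        C' * R ^ dw * (Γ f (ball x (Λ * R))).toReal :=
  stmt17_general μ hpos hfin dw 𝓚𝓢 hKSdef Eform Γ C₁ hC₁ hlower C₀ lam₀ hC₀ hlam₀ hloc C lam hC hlam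
    hPI
end
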